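/- arXiv:1309.6915 — 8 statements merged into one kernel-verified Lean document; each statement's English description precedes it below -/
import Mathlib

section
/- Let (c_n)_{n≥1} be a sequence of positive real numbers such that there is a constant C with ∑_{m=1}^{n-1} c_m ≤ C·c_n for all n > 1. Then there exist positive constants c and δ such that c_m / c_n ≥ c · 2^{δ(m−n)} whenever m > n. -/
/-! Write `S n = c 1 + ⋯ + c n`. The hypothesis says `c (n + 1) ≥ S n / C`, so
`S (n + 1) ≥ (1 + C⁻¹) S n` and the partial sums grow geometrically; it also says
`S m ≤ (C + 1) c m`. Hence for `m > n`,
`(C + 1) c m ≥ S m ≥ (1 + C⁻¹) ^ (m - n) S n ≥ (1 + C⁻¹) ^ (m - n) c n`,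
which is the claim with `c₀ = (C + 1)⁻¹` and `δ = log₂ (1 + C⁻¹)`. -/

open Finset Real

def partialSum (c : ℕ → ℝ) (n : ℕ) : ℝ := ∑ m ∈ Icc 1 n, c m

lemma partialSum_succ (c : ℕ → ℝ) (n : ℕ) :
    partialSum c (n + 1) = partialSum c n + c (n + 1) :=
  sum_Icc_succ_top (by omega) c

lemma self_le_partialSum {c : ℕ → ℝ} (hpos : ∀ n, 1 ≤ n → 0 < c n) {n : ℕ} (hn : 1 ≤ n) :
    c n ≤ partialSum c n :=
  single_le_sum (fun i hi ↦ (hpos i (mem_Icc.mp hi).1).le) (mem_Icc.mpr ⟨hn, le_rfl⟩)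

section DominatedPartialSums

variable {c : ℕ → ℝ} {C : ℝ}

lemma pos_of_partialSum_le_mul (hpos : ∀ n, 1 ≤ n → 0 < c n)
    (h : ∀ n, 1 < n → partialSum c (n - 1) ≤ C * c n) : 0 < C := by
  have h₂ : c 1 ≤ C * c 2 := by simpa [partialSum] using h 2 one_lt_two
  exact pos_of_mul_pos_left ((hpos 1 le_rfl).trans_le h₂) (hpos 2 one_le_two).le

lemma partialSum_le_mul_self (h : ∀ n, 1 < n → partialSum c (n - 1) ≤ C * c n)
    {n : ℕ} (hn : 1 < n) : partialSum c n ≤ (C + 1) * c n := by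
  obtain ⟨k, rfl⟩ : ∃ k, n = k + 1 := ⟨n - 1, by omega⟩
  have hk := h (k + 1) hn
  rw [Nat.add_sub_cancel] at hk
  rw [partialSum_succ]
  linarith

lemma mul_partialSum_le_partialSum_succ (hC : 0 < C)
    (h : ∀ n, 1 < n → partialSum c (n - 1) ≤ C * c n) {n : ℕ} (hn : 1 ≤ n) :
    (1 + C⁻¹) * partialSum c n ≤ partialSum c (n + 1) := by
  have hn' := h (n + 1) (by omega)
  rw [Nat.add_sub_cancel] at hn'
  have hdiv : partialSum c n / C ≤ c (n + 1) := (div_le_iff₀' hC).2 hn'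
  rw [partialSum_succ, add_mul, one_mul, inv_mul_eq_div]
  linarith

lemma pow_mul_partialSum_le (hC : 0 < C) (h : ∀ n, 1 < n → partialSum c (n - 1) ≤ C * c n)
    {n : ℕ} (hn : 1 ≤ n) (k : ℕ) :
    (1 + C⁻¹) ^ k * partialSum c n ≤ partialSum c (n + k) :=
  geom_le (u := fun k ↦ partialSum c (n + k)) (by positivity) k fun j _ ↦
    mul_partialSum_le_partialSum_succ hC h (n := n + j) (by omega)

lemma pow_mul_le_mul_of_lt (hpos : ∀ n, 1 ≤ n → 0 < c n)
    (h : ∀ n, 1 < n → partialSum c (n - 1) ≤ C * c n) {m n : ℕ} (hn : 1 ≤ n) (hnm : n < m) :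
    (1 + C⁻¹) ^ (m - n) * c n ≤ (C + 1) * c m := by
  have hC := pos_of_partialSum_le_mul hpos h
  calc (1 + C⁻¹) ^ (m - n) * c n ≤ (1 + C⁻¹) ^ (m - n) * partialSum c n := by
        gcongr; exact self_le_partialSum hpos hn
    _ ≤ partialSum c (n + (m - n)) := pow_mul_partialSum_le hC h hn (m - n)
    _ = partialSum c m := by rw [Nat.add_sub_cancel' hnm.le]
    _ ≤ (C + 1) * c m := partialSum_le_mul_self h (by omega)

end DominatedPartialSums

lemma rpow_logb_mul_natCast {b x : ℝ} (hb : 0 < b) (hb₁ : b ≠ 1) (hx : 0 < x) (k : ℕ) :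
    b ^ (logb b x * k) = x ^ k := by
  rw [rpow_mul hb.le, rpow_logb hb hb₁ hx, rpow_natCast]

/-- Lemma 5.9(i): if partial sums are dominated by the current term,
the sequence grows geometrically. -/
theorem stmt_0 (c : ℕ → ℝ) (hpos : ∀ n, 1 ≤ n → 0 < c n) (C : ℝ)
    (h : ∀ n, 1 < n → ∑ m ∈ Finset.Icc 1 (n - 1), c m ≤ C * c n) :
    ∃ c₀ > (0 : ℝ), ∃ δ > (0 : ℝ), ∀ m n : ℕ, 1 ≤ n → n < m →
      c m / c n ≥ c₀ * (2 : ℝ) ^ (δ * ((m : ℝ) - (n : ℝ))) := by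
  have hC : 0 < C := pos_of_partialSum_le_mul hpos h
  have hr : 1 < 1 + C⁻¹ := lt_add_of_pos_right 1 (inv_pos.2 hC)
  refine ⟨(C + 1)⁻¹, by positivity, logb 2 (1 + C⁻¹), logb_pos one_lt_two hr, ?_⟩
  intro m n hn hnm
  rw [← Nat.cast_sub hnm.le, rpow_logb_mul_natCast two_pos (by norm_num) (by positivity),
    ge_iff_le, le_div_iff₀ (hpos n hn), mul_assoc, inv_mul_le_iff₀ (by positivity)]
  exact pow_mul_le_mul_of_lt hpos h hn hnm
end

section
/- Let (c_n)_{n≥1} be a sequence of positive real numbers such that ∑_{m=n+1}^∞ c_m converges and there is a constant C with ∑_{m=n+1}^∞ c_m ≤ C·c_n for every n ≥ 1. Then there exist positive constants c and δ such that c_m / c_n ≤ c · 2^{−δ(m−n)} whenever m > n. -/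
/-!
Write `T n = ∑_{m > n} c_m` for the tail sums. Since `T n = c_{n+1} + T (n+1)` and
`T (n+1) ≤ C c_{n+1}`, we get `(C + 1) T (n+1) ≤ C T n`, so the tails decay geometrically with
ratio `θ = C / (C + 1) < 1`. Hence `c_m ≤ T (m-1) ≤ θ^(m-1-n) T n ≤ C θ^(m-1-n) c_n`, and
`θ^k = 2^(-δ k)` with `δ = log₂ θ⁻¹ > 0`.
-/

open Real

noncomputable def tail (f : ℕ → ℝ) (n : ℕ) : ℝ := ∑' m, f (n + 1 + m)

section Tail

variable {f : ℕ → ℝ}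

lemma tail_eq_add_tail_succ (hf : Summable f) (n : ℕ) :
    tail f n = f (n + 1) + tail f (n + 1) := by
  have hshift : Summable fun m => f (n + 1 + m) := by
    simpa only [add_comm (n + 1)] using (summable_nat_add_iff (n + 1)).2 hf
  rw [tail, hshift.tsum_eq_zero_add, tail]
  congr 1
  exact tsum_congr fun m => by rw [add_comm m 1, ← add_assoc]

lemma tail_nonneg (hf0 : 0 ≤ f) (n : ℕ) : 0 ≤ tail f n :=
  tsum_nonneg fun _ => hf0 _

lemma le_tail (hf : Summable f) (hf0 : 0 ≤ f) (n : ℕ) : f (n + 1) ≤ tail f n := by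
  rw [tail_eq_add_tail_succ hf]
  exact le_add_of_nonneg_right (tail_nonneg hf0 _)

lemma add_one_mul_tail_succ_le {C : ℝ} (hf : Summable f) {n : ℕ}
    (hC : tail f (n + 1) ≤ C * f (n + 1)) : (C + 1) * tail f (n + 1) ≤ C * tail f n := by
  rw [tail_eq_add_tail_succ hf n]
  linarith

lemma tail_add_le_geom {C : ℝ} (hf : Summable f) (hC0 : 0 ≤ C)
    (hC : ∀ n, tail f n ≤ C * f n) (n k : ℕ) : tail f (n + k) ≤ (C / (C + 1)) ^ k * tail f n :=
  le_geom (u := fun k => tail f (n + k)) (by positivity) k fun j _ => by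
    rw [div_mul_eq_mul_div, le_div_iff₀ (by positivity), mul_comm]
    exact add_one_mul_tail_succ_le hf (hC _)

lemma le_mul_geom_of_tail_le {C : ℝ} (hf : Summable f) (hf0 : 0 ≤ f) (hC0 : 0 ≤ C)
    (hC : ∀ n, tail f n ≤ C * f n) {m n : ℕ} (hnm : n < m) :
    f m ≤ (C + 1) * (C / (C + 1)) ^ (m - n) * f n := by
  obtain ⟨k, rfl⟩ := Nat.exists_eq_add_of_lt hnm
  have hθ : (C + 1) * (C / (C + 1)) ^ (n + k + 1 - n) = C * (C / (C + 1)) ^ k := by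
    rw [show n + k + 1 - n = k + 1 by omega, pow_succ]
    field_simp
  rw [hθ]
  calc f (n + k + 1) ≤ tail f (n + k) := le_tail hf hf0 _
    _ ≤ (C / (C + 1)) ^ k * tail f n := tail_add_le_geom hf hC0 hC n k
    _ ≤ (C / (C + 1)) ^ k * (C * f n) := by gcongr; exact hC n
    _ = C * (C / (C + 1)) ^ k * f n := by ring

end Tail

lemma pow_sub_eq_two_rpow {θ : ℝ} (hθ : 0 < θ) {m n : ℕ} (hnm : n ≤ m) :
    θ ^ (m - n) = (2 : ℝ) ^ (-logb 2 θ⁻¹ * ((m : ℝ) - n)) := by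
  rw [logb_inv, neg_neg, rpow_mul zero_le_two, rpow_logb two_pos (by norm_num) hθ,
    ← Nat.cast_sub hnm, rpow_natCast]

/-- Lemma 5.9(ii): if tail sums are dominated by the current term,
the sequence decays geometrically. -/
theorem stmt_1 (c : ℕ → ℝ) (hpos : ∀ n, 1 ≤ n → 0 < c n) (C : ℝ)
    (hsum : Summable fun m => c (m + 1))
    (h : ∀ n, 1 ≤ n → ∑' m : ℕ, c (n + 1 + m) ≤ C * c n) :
    ∃ c₀ > (0 : ℝ), ∃ δ > (0 : ℝ), ∀ m n : ℕ, 1 ≤ n → n < m →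
      c m / c n ≤ c₀ * (2 : ℝ) ^ (-δ * ((m : ℝ) - (n : ℝ))) := by
  -- `c 0` is unconstrained, so work with the shifted sequence.
  set d : ℕ → ℝ := fun k => c (k + 1)
  have hdpos : ∀ k, 0 < d k := fun k => hpos (k + 1) le_add_self
  have hd : ∀ k, tail d k ≤ C * d k := fun k => by
    simpa only [tail, d, add_right_comm _ _ 1] using h (k + 1) le_add_self
  have hC : 0 < C := pos_of_mul_pos_left
    ((hdpos 1).trans_le ((le_tail hsum (fun k => (hdpos k).le) 0).trans (hd 0))) (hdpos 0).le
  set θ := C / (C + 1)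
  have hθ0 : 0 < θ := by positivity
  have hθ1 : θ < 1 := (div_lt_one (by positivity)).2 (lt_add_one C)
  refine ⟨C + 1, by positivity, logb 2 θ⁻¹, logb_pos one_lt_two ((one_lt_inv₀ hθ0).2 hθ1), ?_⟩
  intro m n hn hnm
  obtain ⟨n, rfl⟩ : ∃ k, n = k + 1 := ⟨n - 1, by omega⟩
  obtain ⟨m, rfl⟩ : ∃ k, m = k + 1 := ⟨m - 1, by omega⟩
  rw [div_le_iff₀ (hdpos n), ← pow_sub_eq_two_rpow hθ0 hnm.le, Nat.add_sub_add_right]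
  exact le_mul_geom_of_tail_le hsum (fun k => (hdpos k).le) hC.le hd (by omega)
end

section
/- Let {x_n}_{n∈N} be an exact system (complete and minimal) in a separable Hilbert space H with biorthogonal system {x̃_n}. Then {x_n} is a strong Markushevich basis (i.e., for every partition N = N₁ ∪ N₂ into disjoint sets, the mixed system {x_n : n ∈ N₁} ∪ {x̃_n : n ∈ N₂} is complete) if and only if for any h, h̃ ∈ H satisfying (h, x_n)·(x̃_n, h̃) = 0 for all n, one has (h, h̃) = 0. -/
/-!
Biorthogonality makes `span x(N)` and `span x̃(Nᶜ)` orthogonal. When their sum is dense, the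
orthogonal complement of the first is the closure of the second. Given `h, h̃` as in the criterion,
take `N = {n | ⟪h, x n⟫ = 0}`: then `h` lies in that closure while `h̃` is orthogonal to it.
Conversely, a vector `v` orthogonal to a mixed system satisfies the criterion's hypothesis with
`h = h̃ = v`, so `⟪v, v⟫ = 0`.
-/

open scoped InnerProductSpace
open Submodule

section

variable {𝕜 E : Type*} [RCLike 𝕜] [NormedAddCommGroup E] [InnerProductSpace 𝕜 E]
  {ι : Type*} {x y : ι → E}

theorem Submodule.mem_orthogonal_span_iff {s : Set E} {v : E} :
    v ∈ (span 𝕜 s)ᗮ ↔ ∀ u ∈ s, ⟪v, u⟫_𝕜 = 0 := by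
  rw [← span_singleton_le_iff_mem, ← isOrtho_iff_le, isOrtho_span]
  simp

theorem Submodule.isOrtho_span_image_of_disjoint (hxy : ∀ m n, m ≠ n → ⟪x m, y n⟫_𝕜 = 0)
    {S T : Set ι} (hST : Disjoint S T) :
    span 𝕜 (x '' S) ⟂ span 𝕜 (y '' T) := by
  rw [isOrtho_span]
  rintro _ ⟨m, hm, rfl⟩ _ ⟨n, hn, rfl⟩
  exact hxy m n (hST.ne_of_mem hm hn)

variable [CompleteSpace E]

/-- Because `A ⟂ B`, the closure of `B` sits inside `Aᗮ`; its complement there is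
`Bᗮ ⊓ Aᗮ = (A ⊔ B)ᗮ`, which is trivial by density. -/
theorem Submodule.orthogonal_eq_topologicalClosure_of_isOrtho {A B : Submodule 𝕜 E}
    (hAB : A ⟂ B) (hdense : (A ⊔ B).topologicalClosure = ⊤) :
    Aᗮ = B.topologicalClosure := by
  have hle : B.topologicalClosure ≤ Aᗮ :=
    B.topologicalClosure_minimal hAB.symm.le A.isClosed_orthogonal
  have hbot : B.topologicalClosureᗮ ⊓ Aᗮ = ⊥ := by
    rw [orthogonal_closure, inf_orthogonal, sup_comm, ← topologicalClosure_eq_top_iff, hdense]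
  have := sup_orthogonal_inf_of_hasOrthogonalProjection hle
  rwa [hbot, sup_bot_eq, eq_comm] at this

theorem Submodule.inner_eq_zero_of_isOrtho_of_dense {A B : Submodule 𝕜 E} (hAB : A ⟂ B)
    (hdense : (A ⊔ B).topologicalClosure = ⊤) {h h' : E} (hh : h ∈ Aᗮ) (hh' : h' ∈ Bᗮ) :
    ⟪h, h'⟫_𝕜 = 0 := by
  rw [orthogonal_eq_topologicalClosure_of_isOrtho hAB hdense] at hh
  rw [← orthogonal_closure] at hh'
  exact hh' h hh

theorem inner_eq_zero_of_forall_inner_mul_eq_zero (hxy : ∀ m n, m ≠ n → ⟪x m, y n⟫_𝕜 = 0)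
    (hdense : ∀ N : Set ι, (span 𝕜 (x '' N ∪ y '' Nᶜ)).topologicalClosure = ⊤) {h h' : E}
    (hzero : ∀ n, ⟪h, x n⟫_𝕜 * ⟪y n, h'⟫_𝕜 = 0) : ⟪h, h'⟫_𝕜 = 0 := by
  set N := {n | ⟪h, x n⟫_𝕜 = 0}
  refine inner_eq_zero_of_isOrtho_of_dense (isOrtho_span_image_of_disjoint hxy
    disjoint_compl_right) (by rw [← span_union]; exact hdense N) ?_ ?_
  · rw [mem_orthogonal_span_iff]
    rintro _ ⟨n, hn, rfl⟩
    exact hn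
  · rw [mem_orthogonal_span_iff]
    rintro _ ⟨n, hn, rfl⟩
    exact inner_eq_zero_symm.1 ((mul_eq_zero.1 (hzero n)).resolve_left hn)

theorem topologicalClosure_span_image_union_eq_top
    (horth : ∀ h h' : E, (∀ n, ⟪h, x n⟫_𝕜 * ⟪y n, h'⟫_𝕜 = 0) → ⟪h, h'⟫_𝕜 = 0)
    {N₁ N₂ : Set ι} (hN : N₁ ∪ N₂ = Set.univ) :
    (span 𝕜 (x '' N₁ ∪ y '' N₂)).topologicalClosure = ⊤ := by
  rw [topologicalClosure_eq_top_iff, eq_bot_iff]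
  intro v hv
  rw [mem_orthogonal_span_iff] at hv
  have hzero : ∀ n, ⟪v, x n⟫_𝕜 * ⟪y n, v⟫_𝕜 = 0 := by
    intro n
    rcases (hN ▸ Set.mem_univ n : n ∈ N₁ ∪ N₂) with hn | hn
    · rw [hv _ (Or.inl ⟨n, hn, rfl⟩), zero_mul]
    · rw [inner_eq_zero_symm.1 (hv _ (Or.inr ⟨n, hn, rfl⟩)), mul_zero]
  exact (mem_bot 𝕜).2 (inner_self_eq_zero.1 (horth v v hzero))

end

theorem stmt_2_general {H : Type*} [NormedAddCommGroup H] [InnerProductSpace ℂ H]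
    [CompleteSpace H]
    (x xt : ℕ → H)
    (hbi : ∀ m n, ⟪x m, xt n⟫_ℂ = if m = n then 1 else 0) :
    (∀ N₁ N₂ : Set ℕ, N₁ ∪ N₂ = Set.univ → Disjoint N₁ N₂ →
        (Submodule.span ℂ (x '' N₁ ∪ xt '' N₂)).topologicalClosure = ⊤)
      ↔ (∀ h ht : H, (∀ n, ⟪h, x n⟫_ℂ * ⟪xt n, ht⟫_ℂ = 0) → ⟪h, ht⟫_ℂ = 0) := by
  refine ⟨fun hstrong h ht hz => ?_, fun horth N₁ N₂ hN _ =>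
    topologicalClosure_span_image_union_eq_top horth hN⟩
  exact inner_eq_zero_of_forall_inner_mul_eq_zero (fun m n hmn => by simp [hbi, hmn])
    (fun N => hstrong N Nᶜ N.union_compl_self disjoint_compl_right) hz

/-- Criterion for being a strong Markushevich basis: an exact system `x` with
biorthogonal system `xt` in a separable Hilbert space is a strong M-basis iff
any two vectors `h, ht` with `⟪h, x n⟫ ⬝ ⟪xt n, ht⟫ = 0` for all `n` are orthogonal. -/
theorem stmt_2 {H : Type*} [NormedAddCommGroup H] [InnerProductSpace ℂ H]
    [CompleteSpace H] [TopologicalSpace.SeparableSpace H]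
    (x xt : ℕ → H)
    (hbi : ∀ m n, ⟪x m, xt n⟫_ℂ = if m = n then 1 else 0)
    (hcomplete : (Submodule.span ℂ (Set.range x)).topologicalClosure = ⊤)
    (hminimal : ∀ n₀ : ℕ,
      (Submodule.span ℂ (x '' {n | n ≠ n₀})).topologicalClosure ≠ ⊤) :
    (∀ N₁ N₂ : Set ℕ, N₁ ∪ N₂ = Set.univ → Disjoint N₁ N₂ →
        (Submodule.span ℂ (x '' N₁ ∪ xt '' N₂)).topologicalClosure = ⊤)
      ↔ (∀ h ht : H, (∀ n, ⟪h, x n⟫_ℂ * ⟪xt n, ht⟫_ℂ = 0) → ⟪h, ht⟫_ℂ = 0) :=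
  stmt_2_general x xt hbi
end

section
/- Suppose (t_n) is a positive lacunary sequence (t_{n+1}/t_n ≥ q > 1) and (μ_n) positive weights satisfying: there is C > 0 with μ_n ≤ C·2^{−δ(m−n)} μ_m and μ_m/t_m² ≤ C·2^{−δ(m−n)}·μ_n/t_n² for all m > n and some δ > 0. Then for every sequence (a_n) ∈ ℓ², one has ∑_n (1/μ_n)(∑_{k<n} |a_k| μ_k^{1/2})² ≤ C' ∑_n |a_n|² for a constant C' depending only on C, δ. -/
/-!
With `s = 2 ^ (-δ / 2) < 1`, the growth hypothesis gives `√μₖ ≤ √C sⁿ⁻ᵏ √μₙ` for `k < n`, so the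
`n`-th term is at most `C (∑ₖ<ₙ |aₖ| sⁿ⁻ᵏ)²`. Summed over `n`, this is the squared `ℓ²` norm of the
convolution of `|a|` with the summable kernel `(sʲ)_{j ≥ 1}`, which Cauchy–Schwarz and an exchange
of summation bound by `(∑_{j ≥ 1} sʲ)² ‖a‖₂²`.
-/

open Finset

namespace GeometricKernel

variable {s : ℝ}

theorem sum_range_pow_succ_le (hs0 : 0 ≤ s) (hs1 : s < 1) (m : ℕ) :
    ∑ j ∈ range m, s ^ (j + 1) ≤ s / (1 - s) := by
  have hgeom : ∑ j ∈ range m, s ^ j ≤ 1 / (1 - s) := by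
    simpa [Nat.Ico_zero_eq_range] using geom_sum_Ico_le_of_lt_one (m := 0) (n := m) hs0 hs1
  calc ∑ j ∈ range m, s ^ (j + 1) = s * ∑ j ∈ range m, s ^ j := by
        rw [mul_sum]; exact sum_congr rfl fun j _ => pow_succ' s j
    _ ≤ s * (1 / (1 - s)) := by gcongr
    _ = s / (1 - s) := mul_one_div s (1 - s)

theorem sum_range_pow_sub_le (hs0 : 0 ≤ s) (hs1 : s < 1) (n : ℕ) :
    ∑ k ∈ range n, s ^ (n - k) ≤ s / (1 - s) := by
  rw [← sum_range_reflect]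
  calc ∑ k ∈ range n, s ^ (n - (n - 1 - k)) = ∑ j ∈ range n, s ^ (j + 1) :=
        sum_congr rfl fun k hk => by rw [mem_range] at hk; congr 1; omega
    _ ≤ s / (1 - s) := sum_range_pow_succ_le hs0 hs1 n

theorem sum_Ioo_pow_sub_le (hs0 : 0 ≤ s) (hs1 : s < 1) (k N : ℕ) :
    ∑ n ∈ Ioo k N, s ^ (n - k) ≤ s / (1 - s) := by
  rw [← Finset.Ico_add_one_left_eq_Ioo, sum_Ico_eq_sum_range]
  calc ∑ j ∈ range (N - (k + 1)), s ^ (k + 1 + j - k) = ∑ j ∈ range (N - (k + 1)), s ^ (j + 1) :=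
        sum_congr rfl fun j _ => by congr 1; omega
    _ ≤ s / (1 - s) := sum_range_pow_succ_le hs0 hs1 _

theorem sq_sum_mul_pow_sub_le (hs0 : 0 ≤ s) (hs1 : s < 1) (b : ℕ → ℝ) (n : ℕ) :
    (∑ k ∈ range n, b k * s ^ (n - k)) ^ 2
      ≤ s / (1 - s) * ∑ k ∈ range n, b k ^ 2 * s ^ (n - k) := by
  calc (∑ k ∈ range n, b k * s ^ (n - k)) ^ 2
      ≤ (∑ k ∈ range n, s ^ (n - k)) * ∑ k ∈ range n, b k ^ 2 * s ^ (n - k) :=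
        sum_sq_le_sum_mul_sum_of_sq_le_mul _ (fun _ _ => by positivity)
          (fun _ _ => by positivity) fun k _ => le_of_eq (by ring)
    _ ≤ s / (1 - s) * ∑ k ∈ range n, b k ^ 2 * s ^ (n - k) := by
        gcongr
        exact sum_range_pow_sub_le hs0 hs1 n

theorem sum_sum_mul_pow_sub_le (hs0 : 0 ≤ s) (hs1 : s < 1) {c : ℕ → ℝ} (hc : ∀ k, 0 ≤ c k)
    (N : ℕ) :
    ∑ n ∈ range N, ∑ k ∈ range n, c k * s ^ (n - k) ≤ s / (1 - s) * ∑ k ∈ range N, c k := by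
  rw [sum_comm' (t' := range N) (s' := fun k => Ioo k N)
    (fun n k => by simp only [mem_range, mem_Ioo]; omega), mul_sum]
  gcongr with k
  rw [← mul_sum, mul_comm]
  exact mul_le_mul_of_nonneg_right (sum_Ioo_pow_sub_le hs0 hs1 k N) (hc k)

/-- Young's inequality `‖b ∗ K‖₂ ≤ ‖K‖₁ ‖b‖₂` for the one-sided kernel `K j = sʲ`, `j ≥ 1`. -/
theorem sum_sq_sum_mul_pow_sub_le (hs0 : 0 ≤ s) (hs1 : s < 1) (b : ℕ → ℝ) (N : ℕ) :
    ∑ n ∈ range N, (∑ k ∈ range n, b k * s ^ (n - k)) ^ 2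
      ≤ (s / (1 - s)) ^ 2 * ∑ k ∈ range N, b k ^ 2 := by
  have hM : 0 ≤ s / (1 - s) := div_nonneg hs0 (by linarith)
  calc ∑ n ∈ range N, (∑ k ∈ range n, b k * s ^ (n - k)) ^ 2
      ≤ ∑ n ∈ range N, s / (1 - s) * ∑ k ∈ range n, b k ^ 2 * s ^ (n - k) :=
        sum_le_sum fun n _ => sq_sum_mul_pow_sub_le hs0 hs1 b n
    _ = s / (1 - s) * ∑ n ∈ range N, ∑ k ∈ range n, b k ^ 2 * s ^ (n - k) := by rw [mul_sum]
    _ ≤ s / (1 - s) * (s / (1 - s) * ∑ k ∈ range N, b k ^ 2) :=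
        mul_le_mul_of_nonneg_left (sum_sum_mul_pow_sub_le hs0 hs1 (fun k => sq_nonneg _) N) hM
    _ = (s / (1 - s)) ^ 2 * ∑ k ∈ range N, b k ^ 2 := by ring

end GeometricKernel

theorem sqrt_le_of_le_mul_two_rpow {C δ x y : ℝ} (hC : 0 ≤ C) {j : ℕ}
    (h : x ≤ C * (2 : ℝ) ^ (-δ * j) * y) :
    √x ≤ √C * ((2 : ℝ) ^ (-δ / 2)) ^ j * √y := by
  have hpow : (2 : ℝ) ^ (-δ * j) = (((2 : ℝ) ^ (-δ / 2)) ^ j) ^ 2 := by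
    rw [← Real.rpow_natCast, ← Real.rpow_natCast, ← Real.rpow_mul zero_le_two,
      ← Real.rpow_mul zero_le_two]
    push_cast
    ring_nf
  calc √x ≤ √(C * (((2 : ℝ) ^ (-δ / 2)) ^ j) ^ 2 * y) := Real.sqrt_le_sqrt (hpow ▸ h)
    _ = √C * ((2 : ℝ) ^ (-δ / 2)) ^ j * √y := by
        rw [Real.sqrt_mul (by positivity), Real.sqrt_mul hC, Real.sqrt_sq (by positivity)]

theorem one_div_mul_sq_sum_le {ι : Type*} (S : Finset ι) {x c : ℝ} (hx : 0 < x)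
    {a w v : ι → ℝ} (hv : ∀ k ∈ S, v k ≤ c * w k * √x) (hv0 : ∀ k ∈ S, 0 ≤ v k) :
    1 / x * (∑ k ∈ S, |a k| * v k) ^ 2 ≤ c ^ 2 * (∑ k ∈ S, |a k| * w k) ^ 2 := by
  have hsum : ∑ k ∈ S, |a k| * v k ≤ c * √x * ∑ k ∈ S, |a k| * w k := by
    rw [mul_sum]
    refine sum_le_sum fun k hk => ?_
    calc |a k| * v k ≤ |a k| * (c * w k * √x) := by gcongr; exact hv k hk
      _ = c * √x * (|a k| * w k) := by ring
  calc 1 / x * (∑ k ∈ S, |a k| * v k) ^ 2 ≤ 1 / x * (c * √x * ∑ k ∈ S, |a k| * w k) ^ 2 := by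
        gcongr
        exact sum_nonneg fun k hk => mul_nonneg (abs_nonneg _) (hv0 k hk)
    _ = c ^ 2 * (∑ k ∈ S, |a k| * w k) ^ 2 := by
        rw [mul_pow, mul_pow, Real.sq_sqrt hx.le]
        field_simp

theorem stmt_10_general (μ : ℕ → ℝ)
    (hμpos : ∀ n, 0 < μ n) (C δ : ℝ) (hC : 0 < C) (hδ : 0 < δ)
    (hgrow : ∀ m n : ℕ, n < m →
      μ n ≤ C * (2 : ℝ) ^ (-δ * ((m : ℝ) - (n : ℝ))) * μ m) :
    ∃ C' : ℝ, 0 < C' ∧ ∀ a : ℕ → ℝ, (Summable fun n => a n ^ 2) →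
      ∀ N : ℕ, ∑ n ∈ Finset.range N,
          (1 / μ n) * (∑ k ∈ Finset.range n, |a k| * Real.sqrt (μ k)) ^ 2
        ≤ C' * ∑' n, a n ^ 2 := by
  set s : ℝ := (2 : ℝ) ^ (-δ / 2)
  have hs0 : 0 < s := by positivity
  have hs1 : s < 1 := Real.rpow_lt_one_of_one_lt_of_neg one_lt_two (by linarith)
  have hsqrt : ∀ n, ∀ k ∈ range n, √(μ k) ≤ √C * s ^ (n - k) * √(μ n) := fun n k hk =>
    sqrt_le_of_le_mul_two_rpow hC.le <| by
      rw [Nat.cast_sub (mem_range.mp hk).le]; exact hgrow n k (mem_range.mp hk)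
  refine ⟨C * (s / (1 - s)) ^ 2, by have := sub_pos.mpr hs1; positivity, fun a ha N => ?_⟩
  calc ∑ n ∈ range N, (1 / μ n) * (∑ k ∈ range n, |a k| * √(μ k)) ^ 2
      ≤ ∑ n ∈ range N, C * (∑ k ∈ range n, |a k| * s ^ (n - k)) ^ 2 :=
        sum_le_sum fun n _ => Real.sq_sqrt hC.le ▸
          one_div_mul_sq_sum_le _ (hμpos n) (hsqrt n) fun _ _ => Real.sqrt_nonneg _
    _ ≤ C * ((s / (1 - s)) ^ 2 * ∑ k ∈ range N, a k ^ 2) := by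
        rw [← mul_sum]
        gcongr
        simpa only [sq_abs] using GeometricKernel.sum_sq_sum_mul_pow_sub_le hs0.le hs1 (|a ·|) N
    _ ≤ C * (s / (1 - s)) ^ 2 * ∑' n, a n ^ 2 := by
        rw [mul_assoc]
        gcongr
        exact ha.sum_le_tsum _ fun k _ => sq_nonneg _

/-- Weighted Hardy-type inequality under exponential growth of the weights. -/
theorem stmt_10 (t μ : ℕ → ℝ) (q : ℝ) (hq : 1 < q)
    (htpos : ∀ n, 0 < t n) (hlac : ∀ n, q * t n ≤ t (n + 1))
    (hμpos : ∀ n, 0 < μ n) (C δ : ℝ) (hC : 0 < C) (hδ : 0 < δ)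
    (hgrow : ∀ m n : ℕ, n < m →
      μ n ≤ C * (2 : ℝ) ^ (-δ * ((m : ℝ) - (n : ℝ))) * μ m)
    (hdecay : ∀ m n : ℕ, n < m →
      μ m / t m ^ 2 ≤ C * (2 : ℝ) ^ (-δ * ((m : ℝ) - (n : ℝ))) * (μ n / t n ^ 2)) :
    ∃ C' : ℝ, 0 < C' ∧ ∀ a : ℕ → ℝ, (Summable fun n => a n ^ 2) →
      ∀ N : ℕ, ∑ n ∈ Finset.range N,
          (1 / μ n) * (∑ k ∈ Finset.range n, |a k| * Real.sqrt (μ k)) ^ 2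
        ≤ C' * ∑' n, a n ^ 2 :=
  stmt_10_general μ hμpos C δ hC hδ hgrow
end

section
/- Suppose (t_n) is a positive lacunary sequence and (μ_n) positive weights such that μ_m/t_m² ≤ C·2^{−δ(m−n)}·μ_n/t_n² for all m > n. Then for every (a_n) ∈ ℓ², ∑_n (t_n²/μ_n)(∑_{k>n} |a_k| μ_k^{1/2}/t_k)² ≤ C' ∑_n |a_n|² for a constant C' depending only on C, δ. -/
/-!
With `w n = √(μ n) / t n` and `ρ = 2 ^ (-δ / 2) < 1`, the decay hypothesis says
`w (n + 1 + k) ≤ √C * ρ ^ (k + 1) * w n`, so the `n`-th term is at most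
`C * (∑ k, ρ ^ (k + 1) * |a (n + 1 + k)|) ^ 2`. Weighted Cauchy–Schwarz bounds this by
`C * K * ∑ k, ρ ^ (k + 1) * |a (n + 1 + k)| ^ 2` with `K = ∑ k, ρ ^ (k + 1) = ρ / (1 - ρ)`, and
after summing over `n` each `|a j| ^ 2` carries total weight at most `K`.
-/

open Finset

section WeightedCauchySchwarz

variable {ι : Type*} {r x : ι → ℝ}

theorem summable_mul_sq_of_summable_sq (hr : 0 ≤ r) (hr_summ : Summable r)
    (hx : Summable fun i => x i ^ 2) : Summable fun i => r i * x i ^ 2 :=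
  (hx.mul_left (∑' j, r j)).of_nonneg_of_le (fun i => mul_nonneg (hr i) (sq_nonneg _))
    fun i => mul_le_mul_of_nonneg_right
      (hr_summ.le_tsum i fun j _ => hr j) (sq_nonneg _)

theorem summable_mul_of_summable_mul_sq (hr : 0 ≤ r) (hr_summ : Summable r)
    (hrx : Summable fun i => r i * x i ^ 2) : Summable fun i => r i * x i := by
  refine (hr_summ.add hrx).of_norm_bounded fun i => ?_
  have habs : |x i| ≤ 1 + x i ^ 2 := by nlinarith [sq_nonneg (|x i| - 1), sq_abs (x i)]
  calc ‖r i * x i‖ = r i * |x i| := by rw [Real.norm_eq_abs, abs_mul, abs_of_nonneg (hr i)]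
    _ ≤ r i * (1 + x i ^ 2) := mul_le_mul_of_nonneg_left habs (hr i)
    _ = r i + r i * x i ^ 2 := by ring

theorem sq_tsum_mul_le_tsum_mul_tsum_mul_sq (hr : 0 ≤ r) (hr_summ : Summable r)
    (hrx : Summable fun i => r i * x i ^ 2) :
    (∑' i, r i * x i) ^ 2 ≤ (∑' i, r i) * ∑' i, r i * x i ^ 2 := by
  refine le_of_tendsto' ((summable_mul_of_summable_mul_sq hr hr_summ hrx).hasSum.pow 2)
    fun s => ?_
  calc (∑ i ∈ s, r i * x i) ^ 2 ≤ (∑ i ∈ s, r i) * ∑ i ∈ s, r i * x i ^ 2 :=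
        sum_sq_le_sum_mul_sum_of_sq_le_mul s (fun i _ => hr i)
          (fun i _ => mul_nonneg (hr i) (sq_nonneg _))
          fun i _ => (by ring : (r i * x i) ^ 2 = r i * (r i * x i ^ 2)).le
    _ ≤ (∑' i, r i) * ∑' i, r i * x i ^ 2 :=
        mul_le_mul (hr_summ.sum_le_tsum s fun i _ => hr i)
          (hrx.sum_le_tsum s fun i _ => mul_nonneg (hr i) (sq_nonneg _))
          (sum_nonneg fun i _ => mul_nonneg (hr i) (sq_nonneg _))
          (tsum_nonneg hr)

end WeightedCauchySchwarz

theorem sum_range_sq_tsum_mul_shift_le {r b : ℕ → ℝ} (hr : 0 ≤ r) (hr_summ : Summable r)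
    (hb : Summable fun j => b j ^ 2) (N : ℕ) :
    ∑ n ∈ range N, (∑' k, r k * b (n + 1 + k)) ^ 2 ≤ (∑' k, r k) ^ 2 * ∑' j, b j ^ 2 := by
  have hshift (n : ℕ) : Summable fun k => r k * b (n + 1 + k) ^ 2 :=
    summable_mul_sq_of_summable_sq hr hr_summ (hb.comp_injective (add_right_injective _))
  have hcol (k : ℕ) : ∑ n ∈ range N, b (n + 1 + k) ^ 2 ≤ ∑' j, b j ^ 2 := by
    have hinj : Function.Injective fun n => n + 1 + k := fun _ _ h => by simpa using h
    simpa [sum_map] using hb.sum_le_tsum ((range N).map ⟨_, hinj⟩) fun j _ => sq_nonneg _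
  calc ∑ n ∈ range N, (∑' k, r k * b (n + 1 + k)) ^ 2
      ≤ ∑ n ∈ range N, (∑' k, r k) * ∑' k, r k * b (n + 1 + k) ^ 2 :=
        sum_le_sum fun n _ => sq_tsum_mul_le_tsum_mul_tsum_mul_sq hr hr_summ (hshift n)
    _ = (∑' k, r k) * ∑' k, ∑ n ∈ range N, r k * b (n + 1 + k) ^ 2 := by
        rw [← mul_sum, Summable.tsum_finsetSum fun n _ => hshift n]
    _ ≤ (∑' k, r k) * ∑' k, r k * ∑' j, b j ^ 2 := by
        refine mul_le_mul_of_nonneg_left (Summable.tsum_le_tsum (fun k => ?_)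
          (summable_sum fun n _ => hshift n) (hr_summ.mul_right _)) (tsum_nonneg hr)
        rw [← mul_sum]
        exact mul_le_mul_of_nonneg_left (hcol k) (hr k)
    _ = (∑' k, r k) ^ 2 * ∑' j, b j ^ 2 := by rw [tsum_mul_right]; ring

theorem le_sqrt_mul_rpow_pow_of_sq_le {u v C δ : ℝ} {d : ℕ} (hu : 0 ≤ u) (hv : 0 ≤ v)
    (hC : 0 ≤ C) (h : u ^ 2 ≤ C * (2 : ℝ) ^ (-δ * d) * v ^ 2) :
    u ≤ √C * ((2 : ℝ) ^ (-δ / 2)) ^ d * v := by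
  have hsq : (2 : ℝ) ^ (-δ * d) = (((2 : ℝ) ^ (-δ / 2)) ^ d) ^ 2 := by
    rw [← Real.rpow_natCast, ← Real.rpow_natCast, ← Real.rpow_mul zero_le_two,
      ← Real.rpow_mul zero_le_two]
    ring_nf
  rw [← pow_le_pow_iff_left₀ hu (by positivity) two_ne_zero]
  calc u ^ 2 ≤ C * (2 : ℝ) ^ (-δ * d) * v ^ 2 := h
    _ = (√C * ((2 : ℝ) ^ (-δ / 2)) ^ d * v) ^ 2 := by rw [hsq, mul_pow, mul_pow, Real.sq_sqrt hC]

theorem tsum_pow_succ_geometric {ρ : ℝ} (h₀ : 0 ≤ ρ) (h₁ : ρ < 1) :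
    ∑' k : ℕ, ρ ^ (k + 1) = ρ / (1 - ρ) := by
  simp only [pow_succ', tsum_mul_left, tsum_geometric_of_lt_one h₀ h₁, div_eq_mul_inv]

theorem sq_tsum_mul_le_of_le_mul {ι : Type*} {x y r : ι → ℝ} {c : ℝ} (hx : 0 ≤ x) (hy : 0 ≤ y)
    (hyr : ∀ i, y i ≤ c * r i) (hrx : Summable fun i => r i * x i) :
    (∑' i, x i * y i) ^ 2 ≤ c ^ 2 * (∑' i, r i * x i) ^ 2 := by
  have hle (i : ι) : x i * y i ≤ c * (r i * x i) := by
    nlinarith [mul_le_mul_of_nonneg_left (hyr i) (hx i)]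
  have hxy : Summable fun i => x i * y i :=
    (hrx.mul_left c).of_nonneg_of_le (fun i => mul_nonneg (hx i) (hy i)) hle
  rw [← mul_pow, ← tsum_mul_left]
  exact pow_le_pow_left₀ (tsum_nonneg fun i => mul_nonneg (hx i) (hy i))
    (hxy.tsum_le_tsum hle (hrx.mul_left c)) 2

theorem sqrt_div_le_of_decay {t μ : ℕ → ℝ} {C δ : ℝ} (htpos : ∀ n, 0 < t n)
    (hμpos : ∀ n, 0 < μ n) (hC : 0 ≤ C)
    (hdecay : ∀ m n : ℕ, n < m →
      μ m / t m ^ 2 ≤ C * (2 : ℝ) ^ (-δ * ((m : ℝ) - (n : ℝ))) * (μ n / t n ^ 2)) (n k : ℕ) :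
    √(μ (n + 1 + k)) / t (n + 1 + k) ≤ √C * (√(μ n) / t n) * ((2 : ℝ) ^ (-δ / 2)) ^ (k + 1) := by
  have hsq (m : ℕ) : (√(μ m) / t m) ^ 2 = μ m / t m ^ 2 := by
    rw [div_pow, Real.sq_sqrt (hμpos m).le]
  have hnonneg (m : ℕ) : 0 ≤ √(μ m) / t m := div_nonneg (Real.sqrt_nonneg _) (htpos m).le
  have hd : ((n + 1 + k : ℕ) : ℝ) - n = (k + 1 : ℕ) := by push_cast; ring
  have h := hdecay (n + 1 + k) n (by omega)
  rw [hd, ← hsq, ← hsq] at h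
  linarith [le_sqrt_mul_rpow_pow_of_sq_le (hnonneg _) (hnonneg n) hC h]

theorem mul_sq_tsum_shift_le_of_sqrt_div_le {t μ a r : ℕ → ℝ} {C : ℝ} (htpos : ∀ n, 0 < t n)
    (hμpos : ∀ n, 0 < μ n) (hC : 0 ≤ C) (hr : 0 ≤ r) (hr_summ : Summable r)
    (ha : Summable fun j => a j ^ 2)
    (hw : ∀ n k, √(μ (n + 1 + k)) / t (n + 1 + k) ≤ √C * (√(μ n) / t n) * r k) (n : ℕ) :
    t n ^ 2 / μ n * (∑' k, |a (n + 1 + k)| * √(μ (n + 1 + k)) / t (n + 1 + k)) ^ 2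
      ≤ C * (∑' k, r k * |a (n + 1 + k)|) ^ 2 := by
  have hsumm : Summable fun k => r k * |a (n + 1 + k)| :=
    summable_mul_of_summable_mul_sq hr hr_summ (summable_mul_sq_of_summable_sq hr hr_summ (by
      simpa only [sq_abs, Function.comp_def] using ha.comp_injective (add_right_injective (n + 1))))
  have hweight : t n ^ 2 / μ n * (√C * (√(μ n) / t n)) ^ 2 = C := by
    have := (htpos n).ne'
    have := (hμpos n).ne'
    rw [mul_pow, div_pow, Real.sq_sqrt hC, Real.sq_sqrt (hμpos n).le]
    field_simp
  simp only [mul_div_assoc]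
  calc _ ≤ t n ^ 2 / μ n * ((√C * (√(μ n) / t n)) ^ 2 * (∑' k, r k * |a (n + 1 + k)|) ^ 2) :=
        mul_le_mul_of_nonneg_left (sq_tsum_mul_le_of_le_mul (fun k => abs_nonneg _)
          (fun k => div_nonneg (Real.sqrt_nonneg _) (htpos _).le) (hw n) hsumm)
          (div_nonneg (sq_nonneg _) (hμpos n).le)
    _ = _ := by rw [← mul_assoc, hweight]

theorem stmt_11_general (t μ : ℕ → ℝ)
    (htpos : ∀ n, 0 < t n)
    (hμpos : ∀ n, 0 < μ n) (C δ : ℝ) (hC : 0 < C) (hδ : 0 < δ)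
    (hdecay : ∀ m n : ℕ, n < m →
      μ m / t m ^ 2 ≤ C * (2 : ℝ) ^ (-δ * ((m : ℝ) - (n : ℝ))) * (μ n / t n ^ 2)) :
    ∃ C' : ℝ, 0 < C' ∧ ∀ a : ℕ → ℝ, (Summable fun n => a n ^ 2) →
      ∀ N : ℕ, ∑ n ∈ Finset.range N,
          (t n ^ 2 / μ n) *
            (∑' k : ℕ, |a (n + 1 + k)| * Real.sqrt (μ (n + 1 + k)) / t (n + 1 + k)) ^ 2
        ≤ C' * ∑' n, a n ^ 2 := by
  set ρ : ℝ := (2 : ℝ) ^ (-δ / 2)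
  have hρ₀ : 0 < ρ := by positivity
  have hρ₁ : ρ < 1 := Real.rpow_lt_one_of_one_lt_of_neg one_lt_two (by linarith)
  have hgeom : Summable fun k : ℕ => ρ ^ (k + 1) :=
    (summable_geometric_of_lt_one hρ₀.le hρ₁).comp_injective (add_left_injective 1)
  have hρ_nonneg : 0 ≤ fun k : ℕ => ρ ^ (k + 1) := fun k => by positivity
  refine ⟨C * (ρ / (1 - ρ)) ^ 2, by have := sub_pos.2 hρ₁; positivity, fun a ha N => ?_⟩
  calc _ ≤ ∑ n ∈ range N, C * (∑' k : ℕ, ρ ^ (k + 1) * |a (n + 1 + k)|) ^ 2 :=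
        sum_le_sum fun n _ => mul_sq_tsum_shift_le_of_sqrt_div_le htpos hμpos hC.le hρ_nonneg
          hgeom ha (sqrt_div_le_of_decay htpos hμpos hC.le hdecay) n
    _ ≤ C * ((∑' k : ℕ, ρ ^ (k + 1)) ^ 2 * ∑' j, |a j| ^ 2) := by
        rw [← mul_sum]
        gcongr
        exact sum_range_sq_tsum_mul_shift_le (b := fun j => |a j|) hρ_nonneg hgeom
          (by simpa only [sq_abs] using ha) N
    _ = C * (ρ / (1 - ρ)) ^ 2 * ∑' n, a n ^ 2 := by
        simp only [sq_abs, tsum_pow_succ_geometric hρ₀.le hρ₁, mul_assoc]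

/-- Dual weighted Hardy-type inequality under exponential decay of `μ_n / t_n²`. -/
theorem stmt_11 (t μ : ℕ → ℝ) (q : ℝ) (hq : 1 < q)
    (htpos : ∀ n, 0 < t n) (hlac : ∀ n, q * t n ≤ t (n + 1))
    (hμpos : ∀ n, 0 < μ n) (C δ : ℝ) (hC : 0 < C) (hδ : 0 < δ)
    (hdecay : ∀ m n : ℕ, n < m →
      μ m / t m ^ 2 ≤ C * (2 : ℝ) ^ (-δ * ((m : ℝ) - (n : ℝ))) * (μ n / t n ^ 2)) :
    ∃ C' : ℝ, 0 < C' ∧ ∀ a : ℕ → ℝ, (Summable fun n => a n ^ 2) →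
      ∀ N : ℕ, ∑ n ∈ Finset.range N,
          (t n ^ 2 / μ n) *
            (∑' k : ℕ, |a (n + 1 + k)| * Real.sqrt (μ (n + 1 + k)) / t (n + 1 + k)) ^ 2
        ≤ C' * ∑' n, a n ^ 2 :=
  stmt_11_general t μ htpos hμpos C δ hC hδ hdecay
end

section
/- Let (t_n)_{n≥1} be positive reals with t_{n+1}/t_n ≥ e² and t_1 ≥ e², and let A(z) = ∏_n (1 − z/t_n). Then for each fixed k, |A(i t_k)/A'(t_k)|² = 2 t_k² ∏_{l≠k} |1 − i t_k/t_l|²/|1 − t_k/t_l|², and there is a constant c > 0 (depending only on the lacunarity constant) such that |A(i t_k)/A'(t_k)| ≥ c·t_k for all k. -/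
/-!
Removing the `k`-th factor, `A z = (1 - z / t_k) A_k z` with `A_k` entire (the product converges
locally uniformly since `∑ 1/t_n < ∞`) and `A_k t_k ≠ 0` because the zeros are distinct. Hence
`A'(t_k) = -A_k(t_k)/t_k` and `A(i t_k) = (1 - i) A_k(i t_k)`, and the identity is the quotient of
the two convergent products `A_k(i t_k)` and `A_k(t_k)`. Each quotient factor is
`(1 + x²)/(1 - x)² ≥ 1` with `x = t_k/t_l > 0`, so the bound holds with `c = 1`.
-/

open Function Complex

section CanonicalProduct

variable {a : ℕ → ℂ}

lemma multipliable_one_sub_mul (ha : Summable fun n => ‖a n‖) (z : ℂ) :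
    Multipliable fun n => 1 - z * a n := by
  simpa [sub_eq_add_neg] using
    multipliable_one_add_of_summable (f := fun n => -(z * a n)) (by simpa using ha.mul_left ‖z‖)

lemma tprod_one_sub_mul_ne_zero (ha : Summable fun n => ‖a n‖) {z : ℂ}
    (hz : ∀ n, 1 - z * a n ≠ 0) : ∏' n, (1 - z * a n) ≠ 0 := by
  simpa [sub_eq_add_neg] using tprod_one_add_ne_zero_of_summable (f := fun n => -(z * a n))
    (by simpa [sub_eq_add_neg] using hz) (by simpa using ha.mul_left ‖z‖)

lemma differentiableOn_ball_tprod_one_sub_mul (ha : Summable fun n => ‖a n‖) (r : ℝ) :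
    DifferentiableOn ℂ (fun z => ∏' n, (1 - z * a n)) (Metric.ball 0 r) := by
  have hprod := (ha.mul_left r).hasProdLocallyUniformlyOn_nat_one_add (f := fun n z => -(z * a n))
    Metric.isOpen_ball
    (.of_forall fun n z hz => by
      simpa using mul_le_mul_of_nonneg_right (mem_ball_zero_iff.mp hz).le (norm_nonneg (a n)))
    (fun n => by fun_prop)
  simp only [← sub_eq_add_neg] at hprod
  exact hprod.differentiableOn (.of_forall fun s => by
    simpa [Finset.prod_fn] using DifferentiableOn.finsetProd (fun _ _ => by fun_prop))
    Metric.isOpen_ball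

lemma differentiable_tprod_one_sub_mul (ha : Summable fun n => ‖a n‖) :
    Differentiable ℂ fun z => ∏' n, (1 - z * a n) := fun z =>
  (differentiableOn_ball_tprod_one_sub_mul ha (‖z‖ + 1)).differentiableAt
    (Metric.isOpen_ball.mem_nhds (by simp))

lemma summable_norm_update_zero (ha : Summable fun n => ‖a n‖) (k : ℕ) :
    Summable fun n => ‖update a k 0 n‖ :=
  ha.of_nonneg_of_le (fun _ => norm_nonneg _) fun n => by
    rcases eq_or_ne n k with rfl | hn <;> simp [*]

lemma tprod_one_sub_mul_eq_mul_update (ha : Summable fun n => ‖a n‖) (k : ℕ) (z : ℂ) :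
    ∏' n, (1 - z * a n) = (1 - z * a k) * ∏' n, (1 - z * update a k 0 n) := by
  have hupd : update (fun n => 1 - z * a n) k 1 = fun n => 1 - z * update a k 0 n := by
    ext n; rcases eq_or_ne n k with rfl | hn <;> simp [*]
  rw [Multipliable.tprod_eq_mul_tprod_ite' k
    (hupd ▸ multipliable_one_sub_mul (summable_norm_update_zero ha k) z)]
  congr 2 with n
  rcases eq_or_ne n k with rfl | hn <;> simp [*]

lemma hasDerivAt_tprod_one_sub_mul_of_mul_eq_one (ha : Summable fun n => ‖a n‖) {k : ℕ} {z₀ : ℂ}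
    (hz₀ : z₀ * a k = 1) :
    HasDerivAt (fun z => ∏' n, (1 - z * a n)) (-a k * ∏' n, (1 - z₀ * update a k 0 n)) z₀ := by
  have hG := (differentiable_tprod_one_sub_mul (summable_norm_update_zero ha k) z₀).hasDerivAt
  have hlin : HasDerivAt (fun z => 1 - z * a k) (-a k) z₀ := by
    simpa using ((hasDerivAt_id z₀).mul_const (a k)).const_sub 1
  simp_rw [tprod_one_sub_mul_eq_mul_update ha k]
  refine (hlin.mul hG).congr_deriv ?_
  rw [hz₀, sub_self, zero_mul, add_zero]

lemma hasProd_norm_sq_div_tprod_update (ha : Summable fun n => ‖a n‖) (k : ℕ) (z w : ℂ)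
    (hw : ∀ n, n ≠ k → 1 - w * a n ≠ 0) :
    HasProd (fun l : {l : ℕ // l ≠ k} => ‖1 - z * a l‖ ^ 2 / ‖1 - w * a l‖ ^ 2)
      (‖∏' n, (1 - z * update a k 0 n)‖ ^ 2 / ‖∏' n, (1 - w * update a k 0 n)‖ ^ 2) := by
  have hb := summable_norm_update_zero ha k
  have hw' : ∏' n, (1 - w * update a k 0 n) ≠ 0 := by
    refine tprod_one_sub_mul_ne_zero hb fun n => ?_
    rcases eq_or_ne n k with rfl | hn
    · simp
    · simpa [hn] using hw n hn
  have hR := ((multipliable_one_sub_mul hb z).hasProd.norm.pow 2).div₀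
    ((multipliable_one_sub_mul hb w).hasProd.norm.pow 2) (pow_ne_zero 2 (norm_ne_zero_iff.mpr hw'))
  rw [← hasProd_subtype_iff_of_mulSupport_subset (s := {l | l ≠ k})] at hR
  · exact hR.congr_fun fun l => by simp [update_of_ne l.2]
  · intro n hn rfl
    simp at hn

end CanonicalProduct

section Lacunary

variable {t : ℕ → ℝ} {q : ℝ}

lemma pos_of_lacunary (hq : 0 < q) (h0 : 0 < t 0) (hlac : ∀ n, q * t n ≤ t (n + 1)) (n : ℕ) :
    0 < t n := by
  induction n with
  | zero => exact h0
  | succ n ih => exact (mul_pos hq ih).trans_le (hlac n)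

lemma strictMono_of_lacunary (hq : 1 < q) (h0 : 0 < t 0) (hlac : ∀ n, q * t n ≤ t (n + 1)) :
    StrictMono t :=
  strictMono_nat_of_lt_succ fun n =>
    (lt_mul_left (pos_of_lacunary (zero_lt_one.trans hq) h0 hlac n) hq).trans_le (hlac n)

lemma summable_inv_of_lacunary (hq : 1 < q) (h0 : 0 < t 0) (hlac : ∀ n, q * t n ≤ t (n + 1)) :
    Summable fun n => (t n)⁻¹ := by
  have hpos := pos_of_lacunary (zero_lt_one.trans hq) h0 hlac
  refine summable_of_ratio_norm_eventually_le (inv_lt_one_of_one_lt₀ hq) (.of_forall fun n => ?_)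
  rw [Real.norm_of_nonneg (inv_pos.mpr (hpos _)).le, Real.norm_of_nonneg (inv_pos.mpr (hpos _)).le,
    ← mul_inv]
  exact inv_anti₀ (mul_pos (zero_lt_one.trans hq) (hpos n)) (hlac n)

end Lacunary

lemma HasProd.one_le_of_one_le {ι : Type*} {f : ι → ℝ} {a : ℝ} (h : HasProd f a)
    (hf : ∀ i, 1 ≤ f i) : 1 ≤ a :=
  ge_of_tendsto' h fun _ => Finset.one_le_prod fun i _ => hf i

lemma one_le_norm_one_sub_mul_I_div_sq_div_sq {s u : ℝ} (hs : 0 < s) (hu : 0 < u) (hsu : s ≠ u) :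
    1 ≤ ‖1 - (s : ℂ) * I / u‖ ^ 2 / ‖1 - (s : ℂ) / u‖ ^ 2 := by
  have h1 : ‖1 - (s : ℂ) * I / u‖ ^ 2 = 1 + (s / u) ^ 2 := by
    have : (1 : ℂ) - s * I / u = (1 : ℝ) + (-(s / u) : ℝ) * I := by push_cast; ring
    rw [this, Complex.sq_norm, Complex.normSq_add_mul_I]; ring
  have h2 : ‖1 - (s : ℂ) / u‖ ^ 2 = (1 - s / u) ^ 2 := by
    rw [← ofReal_div, ← ofReal_one, ← ofReal_sub, norm_real, Real.norm_eq_abs, sq_abs]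
  have hne : 1 - s / u ≠ 0 := by
    rw [sub_ne_zero, ne_comm, Ne, div_eq_one_iff_eq hu.ne']; exact hsu
  rw [h1, h2, one_le_div (by positivity)]
  nlinarith [div_pos hs hu]

lemma hasProd_norm_sq_div_of_pos_zeros {t : ℕ → ℝ} (hpos : ∀ n, 0 < t n) (hinj : Injective t)
    (hsum : Summable fun n => (t n)⁻¹) (A : ℂ → ℂ)
    (hA : ∀ z : ℂ, A z = ∏' n : ℕ, (1 - z / (t n : ℂ))) (k : ℕ) :
    HasProd (fun l : {l : ℕ // l ≠ k} =>
        ‖1 - ((t k : ℂ) * I) / (t l : ℂ)‖ ^ 2 / ‖1 - (t k : ℂ) / (t l : ℂ)‖ ^ 2)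
      (‖A ((t k : ℂ) * I)‖ ^ 2 / ‖deriv A (t k)‖ ^ 2 / (2 * t k ^ 2)) := by
  set a : ℕ → ℂ := fun n => ((t n : ℂ))⁻¹
  have ha : Summable fun n => ‖a n‖ :=
    hsum.congr fun n => by simp [a, abs_of_pos (hpos n)]
  have htk : (t k : ℂ) ≠ 0 := ofReal_ne_zero.mpr (hpos k).ne'
  have hA' (z : ℂ) : A z = ∏' n, (1 - z * a n) := by simp only [hA, a, div_eq_mul_inv]
  set G : ℂ → ℂ := fun z => ∏' n, (1 - z * update a k 0 n)
  have hAI : A ((t k : ℂ) * I) = (1 - I) * G ((t k : ℂ) * I) := by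
    rw [hA', tprod_one_sub_mul_eq_mul_update ha k]
    simp only [a, G, mul_right_comm _ I, mul_inv_cancel₀ htk, one_mul]
  have hAd : deriv A (t k) = -(t k : ℂ)⁻¹ * G (t k) := by
    rw [funext hA']
    exact (hasDerivAt_tprod_one_sub_mul_of_mul_eq_one ha (mul_inv_cancel₀ htk)).deriv
  have hR := hasProd_norm_sq_div_tprod_update ha k ((t k : ℂ) * I) (t k) fun n hn => by
    rw [sub_ne_zero, ne_comm, ← div_eq_mul_inv, Ne,
      div_eq_one_iff_eq (ofReal_ne_zero.mpr (hpos n).ne'), ofReal_inj]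
    exact hinj.ne hn.symm
  have hval : ‖A ((t k : ℂ) * I)‖ ^ 2 / ‖deriv A (t k)‖ ^ 2 / (2 * t k ^ 2)
      = ‖G ((t k : ℂ) * I)‖ ^ 2 / ‖G (t k)‖ ^ 2 := by
    have hI : ‖1 - I‖ ^ 2 = 2 := by rw [Complex.sq_norm, Complex.normSq_apply]; norm_num
    rw [hAI, hAd, norm_mul, norm_mul, mul_pow, mul_pow, hI, norm_neg, norm_inv, norm_real,
      Real.norm_of_nonneg (hpos k).le]
    have := (hpos k).ne'
    field_simp
  rw [hval]
  exact hR.congr_fun fun l => by simp only [a, div_eq_mul_inv]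

/-- For a genus-zero canonical product `A` with lacunary positive zeros `t_n`
(ratios at least `e²`), one has
`|A(i t_k)/A'(t_k)|² = 2 t_k² ∏_{l ≠ k} |1 - i t_k/t_l|²/|1 - t_k/t_l|²`,
and `|A(i t_k)/A'(t_k)| ≥ c t_k` for a constant `c > 0`. -/
theorem stmt_13 (t : ℕ → ℝ) (h0 : Real.exp 2 ≤ t 0)
    (hlac : ∀ n, Real.exp 2 * t n ≤ t (n + 1))
    (A : ℂ → ℂ) (hA : ∀ z : ℂ, A z = ∏' n : ℕ, (1 - z / (t n : ℂ))) :
    (∀ k : ℕ,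
      ‖A ((t k : ℂ) * Complex.I)‖ ^ 2 / ‖deriv A (t k)‖ ^ 2
        = 2 * t k ^ 2 * ∏' l : {l : ℕ // l ≠ k},
            (‖1 - ((t k : ℂ) * Complex.I) / (t (l : ℕ) : ℂ)‖ ^ 2
              / ‖1 - ((t k : ℂ)) / (t (l : ℕ) : ℂ)‖ ^ 2))
    ∧ ∃ c > (0 : ℝ), ∀ k : ℕ,
        c * t k ≤ ‖A ((t k : ℂ) * Complex.I)‖ / ‖deriv A (t k)‖ := by
  have hq : 1 < Real.exp 2 := Real.one_lt_exp_iff.mpr two_pos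
  have ht0 : 0 < t 0 := (Real.exp_pos 2).trans_le h0
  have hpos := pos_of_lacunary (Real.exp_pos 2) ht0 hlac
  have hinj := (strictMono_of_lacunary hq ht0 hlac).injective
  have hR := hasProd_norm_sq_div_of_pos_zeros hpos hinj (summable_inv_of_lacunary hq ht0 hlac) A hA
  refine ⟨fun k => ?_, 1, one_pos, fun k => ?_⟩
  · rw [(hR k).tprod_eq]
    have := (hpos k).ne'
    field_simp
  · have h1 := (hR k).one_le_of_one_le fun l =>
      one_le_norm_one_sub_mul_I_div_sq_div_sq (hpos k) (hpos l) (hinj.ne l.2.symm)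
    rw [one_le_div (by have := hpos k; positivity), ← div_pow] at h1
    rw [one_mul, ← pow_le_pow_iff_left₀ (hpos k).le (by positivity) two_ne_zero]
    linarith [sq_nonneg (t k)]
end

section
/- Let (s_k) and (s̃_k) be two increasing sequences of positive reals with s̃_k ≥ 10 s_{k−1}, s_k ≥ 10 s̃_k, and define S₂(z) = ∏_k (1 − z/s_k), G₁(z) = ∏_k (1 − z/s̃_k). Then for real y with |y| → ∞ one has |S₂(iy)| ≤ |G₁(iy)| ≲ |y·S₂(iy)|, and moreover |G₁(i s_k)/S₂(i s_k)| ≍ ∏_{m=1}^k (s_m/s̃_m). -/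
/-!
On the imaginary axis `‖1 - iy/a‖ = √(1 + y²/a²)`, so `‖G₁(iy)‖ / ‖S₂(iy)‖` is the limit of the
partial products of the factor ratios `√((1 + y²/s̃ₘ²) / (1 + y²/sₘ²))`. Each of these lies between
`1` and `sₘ/s̃ₘ`, and is also at most `1 + |y|/s̃ₘ`.

For `sₖ ≤ |y| < sₖ₊₁` the factors with `m ≤ k` contribute at most `∏ sₘ/s̃ₘ ≤ sₖ/s̃₀` (telescoping,
as `sₘ ≤ s̃ₘ₊₁`), the factor `m = k + 1` at most `1 + |y|/s̃ₖ₊₁`, and the remaining ones at most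
`exp (|y| ∑ 1/s̃ₘ) ≤ e` by lacunarity. At `y = sₖ` the factors with `m ≤ k` are also at least
`(sₘ/s̃ₘ) / (1 + sₘ/sₖ)`, and `∏ (1 + sₘ/sₖ) ≤ exp (∑ sₘ/sₖ) ≤ e²`.
-/

open Complex Finset Filter Topology

noncomputable def factorRatio (a b t : ℝ) : ℝ := √((1 + t ^ 2 / a ^ 2) / (1 + t ^ 2 / b ^ 2))

section factorRatio

variable {a b : ℝ}

theorem norm_one_sub_mul_I_div (t : ℝ) :
    ‖1 - (t : ℂ) * I / a‖ = √(1 + t ^ 2 / a ^ 2) := by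
  have : (1 : ℂ) - t * I / a = (1 : ℝ) + (-(t / a) : ℝ) * I := by push_cast; ring
  rw [this, norm_add_mul_I, neg_sq, div_pow, one_pow]

theorem norm_div_norm_one_sub_mul_I_div (t : ℝ) :
    ‖1 - (t : ℂ) * I / a‖ / ‖1 - (t : ℂ) * I / b‖ = factorRatio a b t := by
  rw [norm_one_sub_mul_I_div t, norm_one_sub_mul_I_div t, factorRatio,
    Real.sqrt_div' _ (by positivity)]

theorem factorRatio_nonneg (t : ℝ) : 0 ≤ factorRatio a b t := Real.sqrt_nonneg _

theorem one_le_factorRatio (t : ℝ) (ha : 0 < a) (hab : a ≤ b) : 1 ≤ factorRatio a b t := by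
  rw [factorRatio, Real.one_le_sqrt, one_le_div (by positivity)]
  gcongr

theorem factorRatio_le_div (t : ℝ) (ha : 0 < a) (hab : a ≤ b) : factorRatio a b t ≤ b / a := by
  have hb : 0 < b := ha.trans_le hab
  rw [factorRatio, Real.sqrt_le_left (by positivity), div_le_iff₀ (by positivity)]
  have : a ^ 2 ≤ b ^ 2 := by gcongr
  field_simp
  nlinarith [sq_nonneg t]

theorem factorRatio_le_one_add (t : ℝ) (ha : 0 < a) : factorRatio a b t ≤ 1 + |t| / a := by
  rw [factorRatio, Real.sqrt_le_left (by positivity)]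
  calc (1 + t ^ 2 / a ^ 2) / (1 + t ^ 2 / b ^ 2) ≤ 1 + t ^ 2 / a ^ 2 :=
        div_le_self (by positivity) (le_add_of_nonneg_right (by positivity))
    _ ≤ (1 + |t| / a) ^ 2 := by
        rw [← sq_abs t, add_sq, div_pow]
        nlinarith [show 0 ≤ |t| / a by positivity]

theorem div_div_one_add_le_factorRatio {t : ℝ} (ht : 0 < t) (ha : 0 < a) (hb : 0 < b) :
    b / a / (1 + b / t) ≤ factorRatio a b t := by
  rw [factorRatio, Real.le_sqrt (by positivity) (by positivity), le_div_iff₀ (by positivity)]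
  field_simp
  nlinarith [mul_pos ht hb]

end factorRatio

structure IsLacunary (u : ℕ → ℝ) : Prop where
  pos_zero : 0 < u 0
  two_mul_le : ∀ m, 2 * u m ≤ u (m + 1)

noncomputable def genusZeroProduct (u : ℕ → ℝ) (z : ℂ) : ℂ := ∏' k, (1 - z / u k)

namespace IsLacunary

variable {u : ℕ → ℝ}

theorem pos (hu : IsLacunary u) : ∀ m, 0 < u m
  | 0 => hu.pos_zero
  | m + 1 => by linarith [hu.two_mul_le m, hu.pos m]

theorem sum_range_succ_le (hu : IsLacunary u) (k : ℕ) : ∑ m ∈ range (k + 1), u m ≤ 2 * u k := by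
  induction k with
  | zero => simp only [zero_add, range_one, sum_singleton]; linarith [hu.pos_zero]
  | succ k ih => rw [sum_range_succ]; linarith [hu.two_mul_le k]

theorem sum_Ico_inv_le (hu : IsLacunary u) {j n : ℕ} (hjn : j ≤ n) :
    ∑ m ∈ Ico j n, (u m)⁻¹ ≤ 2 / u j := by
  suffices ∑ m ∈ Ico j n, (u m)⁻¹ + 2 / u n ≤ 2 / u j by
    linarith [div_pos two_pos (hu.pos n)]
  induction n, hjn using Nat.le_induction with
  | base => simp
  | succ n hjn ih =>
    have : 2 / u (n + 1) ≤ (u n)⁻¹ := by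
      rw [div_le_iff₀ (hu.pos _), inv_mul_eq_div, le_div_iff₀ (hu.pos _)]
      exact hu.two_mul_le n
    rw [sum_Ico_succ_top hjn]
    linarith [div_eq_mul_inv (2 : ℝ) (u n)]

theorem summable_inv (hu : IsLacunary u) : Summable fun m => (u m)⁻¹ :=
  summable_of_sum_range_le (fun m => (inv_pos.2 (hu.pos m)).le)
    fun n => range_eq_Ico n ▸ hu.sum_Ico_inv_le n.zero_le

theorem summable_norm_div (hu : IsLacunary u) (z : ℂ) : Summable fun k => ‖-(z / u k)‖ := by
  simpa [norm_div, abs_of_pos (hu.pos _), div_eq_mul_inv] using hu.summable_inv.mul_left ‖z‖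

theorem multipliable (hu : IsLacunary u) (z : ℂ) : Multipliable fun k => 1 - z / u k := by
  simpa [sub_eq_add_neg] using multipliable_one_add_of_summable (hu.summable_norm_div z)

theorem genusZeroProduct_mul_I_ne_zero (hu : IsLacunary u) (t : ℝ) :
    genusZeroProduct u (t * I) ≠ 0 := by
  have hfactor : ∀ k, 1 + -((t : ℂ) * I / u k) ≠ 0 := fun k => by
    rw [← sub_eq_add_neg, ← norm_ne_zero_iff, norm_one_sub_mul_I_div]
    positivity
  simpa [genusZeroProduct, sub_eq_add_neg] using
    tprod_one_add_ne_zero_of_summable hfactor (hu.summable_norm_div _)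

theorem exists_le_lt_succ (hu : IsLacunary u) {t : ℝ} (ht : u 0 ≤ t) :
    ∃ K, u K ≤ t ∧ t < u (K + 1) := by
  obtain ⟨N, hN⟩ :=
    ((tendsto_atTop_of_geom_le hu.pos_zero one_lt_two hu.two_mul_le).eventually_gt_atTop t).exists
  by_contra! hstep
  have : ∀ n, u n ≤ t := fun n => Nat.rec ht (fun n ih => hstep n ih) n
  linarith [this N]

end IsLacunary

theorem tendsto_prod_factorRatio {u v : ℕ → ℝ} (hu : IsLacunary u) (hv : IsLacunary v) (t : ℝ) :
    Tendsto (fun n => ∏ m ∈ range n, factorRatio (u m) (v m) t) atTop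
      (𝓝 (‖genusZeroProduct u (t * I)‖ / ‖genusZeroProduct v (t * I)‖)) := by
  have hlim : ∀ {w : ℕ → ℝ}, IsLacunary w → Tendsto (fun n => ∏ m ∈ range n, ‖1 - t * I / w m‖)
      atTop (𝓝 ‖genusZeroProduct w (t * I)‖) := fun hw => by
    simpa only [genusZeroProduct, norm_prod] using
      (hw.multipliable (t * I)).hasProd.tendsto_prod_nat.norm
  refine ((hlim hu).div (hlim hv) (norm_ne_zero_iff.2 (hv.genusZeroProduct_mul_I_ne_zero t))).congr
    fun n => ?_
  rw [Pi.div_apply, ← prod_div_distrib]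
  exact prod_congr rfl fun m _ => norm_div_norm_one_sub_mul_I_div t

structure Interlaced (st s : ℕ → ℝ) : Prop where
  pos_zero : 0 < st 0
  ten_mul_le : ∀ k, 10 * st k ≤ s k
  ten_mul_le_succ : ∀ k, 10 * s k ≤ st (k + 1)

namespace Interlaced

variable {st s : ℕ → ℝ}

theorem left_pos (h : Interlaced st s) : ∀ k, 0 < st k
  | 0 => h.pos_zero
  | k + 1 => by linarith [h.ten_mul_le k, h.ten_mul_le_succ k, h.left_pos k]

theorem right_pos (h : Interlaced st s) (k : ℕ) : 0 < s k := by
  linarith [h.ten_mul_le k, h.left_pos k]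

theorem left_le (h : Interlaced st s) (k : ℕ) : st k ≤ s k := by
  linarith [h.ten_mul_le k, h.left_pos k]

theorem right_le_left_succ (h : Interlaced st s) (k : ℕ) : s k ≤ st (k + 1) := by
  linarith [h.ten_mul_le_succ k, h.right_pos k]

theorem isLacunary_left (h : Interlaced st s) : IsLacunary st :=
  ⟨h.pos_zero, fun k => by linarith [h.ten_mul_le_succ k, h.left_le k, h.left_pos k]⟩

theorem isLacunary_right (h : Interlaced st s) : IsLacunary s :=
  ⟨h.right_pos 0, fun k => by
    linarith [h.ten_mul_le (k + 1), h.right_le_left_succ k, h.right_pos k]⟩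

theorem prod_range_succ_div_le (h : Interlaced st s) (K : ℕ) :
    ∏ m ∈ range (K + 1), s m / st m ≤ s K / st 0 := by
  induction K with
  | zero => simp
  | succ K ih =>
    rw [prod_range_succ]
    calc (∏ m ∈ range (K + 1), s m / st m) * (s (K + 1) / st (K + 1))
        ≤ s K / st 0 * (s (K + 1) / st (K + 1)) := by
          gcongr
          exact div_nonneg (h.right_pos _).le (h.left_pos _).le
      _ = s (K + 1) / st 0 * (s K / st (K + 1)) := by ring
      _ ≤ s (K + 1) / st 0 :=
          mul_le_of_le_one_right (div_nonneg (h.right_pos _).le h.pos_zero.le)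
            ((div_le_one (h.left_pos _)).2 (h.right_le_left_succ K))

theorem prod_Ico_factorRatio_le_exp_one (h : Interlaced st s) {t : ℝ} {j n : ℕ}
    (hj : 2 * |t| ≤ st j) (hjn : j ≤ n) :
    ∏ m ∈ Ico j n, factorRatio (st m) (s m) t ≤ Real.exp 1 :=
  calc ∏ m ∈ Ico j n, factorRatio (st m) (s m) t
      ≤ ∏ m ∈ Ico j n, (1 + |t| / st m) :=
        prod_le_prod (fun _ _ => factorRatio_nonneg t)
          fun m _ => factorRatio_le_one_add t (h.left_pos m)
    _ ≤ Real.exp (∑ m ∈ Ico j n, |t| / st m) :=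
        Real.prod_one_add_le_exp_sum _ fun m => div_nonneg (abs_nonneg t) (h.left_pos m).le
    _ ≤ Real.exp 1 := by
        gcongr
        simp only [div_eq_mul_inv, ← mul_sum]
        calc |t| * ∑ m ∈ Ico j n, (st m)⁻¹ ≤ |t| * (2 / st j) :=
              mul_le_mul_of_nonneg_left (h.isLacunary_left.sum_Ico_inv_le hjn) (abs_nonneg t)
          _ ≤ 1 := by
              rw [mul_div_assoc', div_le_one (h.left_pos j)]
              linarith

theorem prod_range_factorRatio_le_mul_abs (h : Interlaced st s) {t : ℝ} {K n : ℕ}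
    (hK : s K ≤ |t|) (hK' : |t| < s (K + 1)) (hn : K + 2 ≤ n) :
    ∏ m ∈ range n, factorRatio (st m) (s m) t ≤ 2 * Real.exp 1 / st 0 * |t| := by
  have hhead : ∏ m ∈ range (K + 1), factorRatio (st m) (s m) t ≤ s K / st 0 :=
    (prod_le_prod (fun _ _ => factorRatio_nonneg t)
      fun m _ => factorRatio_le_div t (h.left_pos m) (h.left_le m)).trans
      (h.prod_range_succ_div_le K)
  have htail : ∏ m ∈ Ico (K + 2) n, factorRatio (st m) (s m) t ≤ Real.exp 1 :=
    h.prod_Ico_factorRatio_le_exp_one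
      (by linarith [h.ten_mul_le_succ (K + 1), h.right_pos (K + 1)]) hn
  have hmiddle : s K * factorRatio (st (K + 1)) (s (K + 1)) t ≤ 2 * |t| := by
    have := factorRatio_le_one_add (b := s (K + 1)) t (h.left_pos (K + 1))
    have : s K * (|t| / st (K + 1)) ≤ |t| := by
      rw [mul_div_assoc', div_le_iff₀ (h.left_pos _), mul_comm]
      exact mul_le_mul_of_nonneg_left (h.right_le_left_succ K) (abs_nonneg t)
    nlinarith [h.right_pos K]
  have hmiddle_nonneg := factorRatio_nonneg (a := st (K + 1)) (b := s (K + 1)) t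
  rw [← prod_range_mul_prod_Ico _ hn, prod_range_succ]
  calc (∏ m ∈ range (K + 1), factorRatio (st m) (s m) t) *
        factorRatio (st (K + 1)) (s (K + 1)) t * ∏ m ∈ Ico (K + 2) n, factorRatio (st m) (s m) t
      ≤ s K / st 0 * factorRatio (st (K + 1)) (s (K + 1)) t * Real.exp 1 :=
        mul_le_mul (mul_le_mul_of_nonneg_right hhead hmiddle_nonneg) htail
          (prod_nonneg fun _ _ => factorRatio_nonneg t)
          (mul_nonneg (div_nonneg (h.right_pos K).le h.pos_zero.le) hmiddle_nonneg)
    _ = s K * factorRatio (st (K + 1)) (s (K + 1)) t * (Real.exp 1 / st 0) := by ring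
    _ ≤ 2 * |t| * (Real.exp 1 / st 0) :=
        mul_le_mul_of_nonneg_right hmiddle (div_nonneg (Real.exp_pos 1).le h.pos_zero.le)
    _ = 2 * Real.exp 1 / st 0 * |t| := by ring

theorem prod_range_factorRatio_le (h : Interlaced st s) (k : ℕ) {n : ℕ} (hn : k + 1 ≤ n) :
    ∏ m ∈ range n, factorRatio (st m) (s m) (s k) ≤
      Real.exp 1 * ∏ m ∈ range (k + 1), s m / st m := by
  rw [← prod_range_mul_prod_Ico _ hn, mul_comm (Real.exp 1)]
  refine mul_le_mul (prod_le_prod (fun _ _ => factorRatio_nonneg _)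
    fun m _ => factorRatio_le_div _ (h.left_pos m) (h.left_le m))
    (h.prod_Ico_factorRatio_le_exp_one ?_ hn) (prod_nonneg fun _ _ => factorRatio_nonneg _)
    (prod_nonneg fun m _ => div_nonneg (h.right_pos m).le (h.left_pos m).le)
  rw [abs_of_pos (h.right_pos k)]
  linarith [h.ten_mul_le_succ k, h.right_pos k]

theorem le_prod_range_factorRatio (h : Interlaced st s) (k : ℕ) {n : ℕ} (hn : k + 1 ≤ n) :
    (Real.exp 2)⁻¹ * ∏ m ∈ range (k + 1), s m / st m ≤
      ∏ m ∈ range n, factorRatio (st m) (s m) (s k) := by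
  have hsk := h.right_pos k
  have hsum : ∏ m ∈ range (k + 1), (1 + s m / s k) ≤ Real.exp 2 := by
    refine (Real.prod_one_add_le_exp_sum _ fun m => (div_pos (h.right_pos m) hsk).le).trans ?_
    rw [← sum_div, Real.exp_le_exp, div_le_iff₀ hsk]
    exact h.isLacunary_right.sum_range_succ_le k
  calc (Real.exp 2)⁻¹ * ∏ m ∈ range (k + 1), s m / st m
      ≤ (∏ m ∈ range (k + 1), s m / st m) / ∏ m ∈ range (k + 1), (1 + s m / s k) := by
        rw [inv_mul_eq_div]
        exact div_le_div_of_nonneg_left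
          (prod_nonneg fun m _ => div_nonneg (h.right_pos m).le (h.left_pos m).le)
          (prod_pos fun m _ => by have := h.right_pos m; positivity) hsum
    _ = ∏ m ∈ range (k + 1), s m / st m / (1 + s m / s k) := (prod_div_distrib ..).symm
    _ ≤ ∏ m ∈ range (k + 1), factorRatio (st m) (s m) (s k) :=
        prod_le_prod (fun m _ => by have := h.right_pos m; have := h.left_pos m; positivity)
          fun m _ => div_div_one_add_le_factorRatio hsk (h.left_pos m) (h.right_pos m)
    _ ≤ ∏ m ∈ range n, factorRatio (st m) (s m) (s k) :=
        prod_le_prod_of_subset_of_one_le (range_subset_range.2 hn)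
          (fun _ _ => factorRatio_nonneg _)
          fun m _ _ => one_le_factorRatio _ (h.left_pos m) (h.left_le m)

theorem one_le_norm_div (h : Interlaced st s) (t : ℝ) :
    1 ≤ ‖genusZeroProduct st (t * I)‖ / ‖genusZeroProduct s (t * I)‖ :=
  ge_of_tendsto' (tendsto_prod_factorRatio h.isLacunary_left h.isLacunary_right t)
    fun _ => one_le_prod fun m _ => one_le_factorRatio t (h.left_pos m) (h.left_le m)

theorem norm_div_le_mul_abs (h : Interlaced st s) {t : ℝ} (ht : s 0 ≤ |t|) :
    ‖genusZeroProduct st (t * I)‖ / ‖genusZeroProduct s (t * I)‖ ≤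
      2 * Real.exp 1 / st 0 * |t| := by
  obtain ⟨K, hK, hK'⟩ := h.isLacunary_right.exists_le_lt_succ ht
  exact le_of_tendsto (tendsto_prod_factorRatio h.isLacunary_left h.isLacunary_right t)
    (eventually_atTop.2 ⟨K + 2, fun _ hn => h.prod_range_factorRatio_le_mul_abs hK hK' hn⟩)

theorem norm_div_at_le (h : Interlaced st s) (k : ℕ) :
    ‖genusZeroProduct st (s k * I)‖ / ‖genusZeroProduct s (s k * I)‖ ≤
      Real.exp 1 * ∏ m ∈ range (k + 1), s m / st m :=
  le_of_tendsto (tendsto_prod_factorRatio h.isLacunary_left h.isLacunary_right (s k))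
    (eventually_atTop.2 ⟨k + 1, fun _ hn => h.prod_range_factorRatio_le k hn⟩)

theorem le_norm_div_at (h : Interlaced st s) (k : ℕ) :
    (Real.exp 2)⁻¹ * ∏ m ∈ range (k + 1), s m / st m ≤
      ‖genusZeroProduct st (s k * I)‖ / ‖genusZeroProduct s (s k * I)‖ :=
  ge_of_tendsto (tendsto_prod_factorRatio h.isLacunary_left h.isLacunary_right (s k))
    (eventually_atTop.2 ⟨k + 1, fun _ hn => h.le_prod_range_factorRatio k hn⟩)

end Interlaced

/-- Comparison of two interlacing lacunary canonical products
`S₂(z) = ∏(1 - z/s_k)`, `G₁(z) = ∏(1 - z/s̃_k)` along the imaginary axis: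
`|S₂(iy)| ≤ |G₁(iy)| ≲ |y S₂(iy)|`, and
`|G₁(i s_k)/S₂(i s_k)| ≍ ∏_{m ≤ k} s_m/s̃_m`. -/
theorem stmt_18 (s st : ℕ → ℝ) (hst0 : 0 < st 0)
    (hints : ∀ k, 10 * st k ≤ s k) (hintst : ∀ k, 10 * s k ≤ st (k + 1))
    (S₂ G₁ : ℂ → ℂ)
    (hS₂ : ∀ z : ℂ, S₂ z = ∏' k : ℕ, (1 - z / (s k : ℂ)))
    (hG₁ : ∀ z : ℂ, G₁ z = ∏' k : ℕ, (1 - z / (st k : ℂ))) :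
    (∀ y : ℝ, ‖S₂ ((y : ℂ) * Complex.I)‖ ≤
        ‖G₁ ((y : ℂ) * Complex.I)‖)
    ∧ (∃ C > (0 : ℝ), ∃ Y : ℝ, ∀ y : ℝ, Y ≤ |y| →
        ‖G₁ ((y : ℂ) * Complex.I)‖ ≤
          C * |y| * ‖S₂ ((y : ℂ) * Complex.I)‖)
    ∧ (∃ c₁ > (0 : ℝ), ∃ c₂ > (0 : ℝ), ∀ k : ℕ,
        c₁ * ∏ m ∈ Finset.range (k + 1), s m / st m ≤
            ‖G₁ ((s k : ℂ) * Complex.I)‖ /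
              ‖S₂ ((s k : ℂ) * Complex.I)‖
        ∧ ‖G₁ ((s k : ℂ) * Complex.I)‖ /
              ‖S₂ ((s k : ℂ) * Complex.I)‖ ≤
            c₂ * ∏ m ∈ Finset.range (k + 1), s m / st m) := by
  have h : Interlaced st s := ⟨hst0, hints, hintst⟩
  obtain rfl : S₂ = genusZeroProduct s := funext hS₂
  obtain rfl : G₁ = genusZeroProduct st := funext hG₁
  have hS : ∀ y : ℝ, 0 < ‖genusZeroProduct s (y * I)‖ := fun y =>
    norm_pos_iff.2 (h.isLacunary_right.genusZeroProduct_mul_I_ne_zero y)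
  refine ⟨fun y => ?_, ⟨2 * Real.exp 1 / st 0, by positivity, s 0, fun y hy => ?_⟩,
    ⟨(Real.exp 2)⁻¹, by positivity, Real.exp 1, by positivity,
      fun k => ⟨h.le_norm_div_at k, h.norm_div_at_le k⟩⟩⟩
  · exact (one_le_div (hS y)).1 (h.one_le_norm_div y)
  · exact (div_le_iff₀ (hS y)).1 (h.norm_div_le_mul_abs hy)
end

section
/- Let (t_n)_{n≥1} be positive reals with t_{n+1} ≥ 2 t_n, let (μ_n) be positive weights, and define Ω_1 = {z : |z| ≤ (t_1+t_2)/2}, Ω_n = {z : (t_{n−1}+t_n)/2 < |z| ≤ (t_n+t_{n+1})/2}. Then for z ∈ Ω_n one has |∏_{k}(1 − z/t_k)| ≍ (|z|^{n−1} / ∏_{k=1}^{n−1} t_k) · |z − t_n|/t_n, with implicit constants depending only on the lacunarity constant. -/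
/-!
On `Ω_n` the factors of `A` fall into three groups. For `k < n` write
`1 - z/t_k = -(z/t_k)(1 - t_k/z)`: the first factors produce `|z|ⁿ / ∏_{k<n} t_k`, and lacunarity
gives `∑_{k<n} t_k ≤ 2 t_{n-1} ≤ 4|z|/3`. For `k > n` one has `|z| ≤ 3 t_{n+1}/4` and
`∑_{k>n} 1/t_k ≤ 2/t_{n+1}`. In both groups the remaining factors have the form `1 - w_k` with
`∑ |w_k| = S` bounded and `|w_k| ≤ c < 1`, so their product lies between `e^{-S/(1-c)}` and `e^S`.
The single factor `k = n` is `|z - t_n| / t_n`.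
-/

open Finset

lemma Real.exp_neg_div_le_one_sub {a c : ℝ} (ha : 0 ≤ a) (hac : a ≤ c) (hc : c < 1) :
    Real.exp (-(a / (1 - c))) ≤ 1 - a := by
  have h1a : 0 < 1 - a := by linarith
  have hlog : -(a / (1 - a)) ≤ Real.log (1 - a) := by
    have h := Real.one_sub_inv_le_log_of_pos h1a
    rwa [show 1 - (1 - a)⁻¹ = -(a / (1 - a)) by field_simp; ring] at h
  calc Real.exp (-(a / (1 - c))) ≤ Real.exp (-(a / (1 - a))) := by gcongr
    _ ≤ Real.exp (Real.log (1 - a)) := Real.exp_le_exp.2 hlog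
    _ = 1 - a := Real.exp_log h1a

section Products

variable {ι : Type*}

lemma exp_neg_sum_div_le_prod_norm_one_sub {R : Type*} [NormedRing R] [NormOneClass R]
    (s : Finset ι) (w : ι → R) {c : ℝ} (hc : c < 1) (hw : ∀ i ∈ s, ‖w i‖ ≤ c) :
    Real.exp (-((∑ i ∈ s, ‖w i‖) / (1 - c))) ≤ ∏ i ∈ s, ‖1 - w i‖ := by
  rw [Finset.sum_div, ← Finset.sum_neg_distrib, Real.exp_sum]
  refine Finset.prod_le_prod (fun _ _ ↦ Real.exp_nonneg _) fun i hi ↦ ?_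
  calc Real.exp (-(‖w i‖ / (1 - c))) ≤ 1 - ‖w i‖ :=
        Real.exp_neg_div_le_one_sub (norm_nonneg _) (hw i hi) hc
    _ = ‖(1 : R)‖ - ‖w i‖ := by rw [norm_one]
    _ ≤ ‖1 - w i‖ := norm_sub_norm_le _ _

lemma prod_norm_one_sub_le_exp_sum {R : Type*} [NormedRing R] [NormOneClass R]
    (s : Finset ι) (w : ι → R) :
    ∏ i ∈ s, ‖1 - w i‖ ≤ Real.exp (∑ i ∈ s, ‖w i‖) :=
  (Finset.prod_le_prod (fun _ _ ↦ norm_nonneg _) fun i _ ↦ by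
    simpa [add_comm] using norm_sub_le (1 : R) (w i)).trans
    (Real.prod_one_add_le_exp_sum s fun _ ↦ norm_nonneg _)

lemma exp_neg_tsum_div_le_norm_tprod_one_sub {R : Type*} [NormedCommRing R] [NormOneClass R]
    [NormMulClass R] [CompleteSpace R] {w : ι → R} (hs : Summable fun i ↦ ‖w i‖) {c : ℝ}
    (hc : c < 1) (hw : ∀ i, ‖w i‖ ≤ c) :
    Real.exp (-((∑' i, ‖w i‖) / (1 - c))) ≤ ‖∏' i, (1 - w i)‖ ∧
      ‖∏' i, (1 - w i)‖ ≤ Real.exp (∑' i, ‖w i‖) := by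
  have hprod : HasProd (fun i ↦ ‖1 - w i‖) ‖∏' i, (1 - w i)‖ := by
    have := multipliable_one_add_of_summable (f := fun i ↦ -w i) (by simpa using hs)
    simpa [sub_eq_add_neg] using this.hasProd.norm
  constructor
  · refine ge_of_tendsto' hprod fun s ↦ ?_
    refine le_trans ?_ (exp_neg_sum_div_le_prod_norm_one_sub s w hc fun i _ ↦ hw i)
    gcongr
    exact hs.sum_le_tsum s fun i _ ↦ norm_nonneg _
  · refine le_of_tendsto' hprod fun s ↦ (prod_norm_one_sub_le_exp_sum s w).trans ?_
    gcongr
    exact hs.sum_le_tsum s fun i _ ↦ norm_nonneg _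

end Products

lemma norm_one_sub_div_eq_mul {𝕜 : Type*} [NormedField 𝕜] {z t : 𝕜} (hz : z ≠ 0) (ht : t ≠ 0) :
    ‖1 - z / t‖ = ‖z‖ / ‖t‖ * ‖1 - t / z‖ := by
  rw [← norm_div, ← norm_mul, ← norm_neg]
  congr 1
  field_simp
  ring

section Lacunary

variable {t : ℕ → ℝ}

lemma lacunary_pos (h0 : 0 < t 0) (hlac : ∀ k, 2 * t k ≤ t (k + 1)) (k : ℕ) : 0 < t k := by
  induction k with
  | zero => exact h0
  | succ k ih => linarith [hlac k]

lemma lacunary_monotone (h0 : 0 < t 0) (hlac : ∀ k, 2 * t k ≤ t (k + 1)) : Monotone t :=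
  monotone_nat_of_le_succ fun k ↦ by linarith [hlac k, lacunary_pos h0 hlac k]

lemma lacunary_sum_range_succ_le (h0 : 0 < t 0) (hlac : ∀ k, 2 * t k ≤ t (k + 1)) (n : ℕ) :
    ∑ k ∈ range (n + 1), t k ≤ 2 * t n := by
  induction n with
  | zero => rw [sum_range_one]; linarith
  | succ n ih => rw [sum_range_succ]; linarith [hlac n]

lemma lacunary_inv_le (h0 : 0 < t 0) (hlac : ∀ k, 2 * t k ≤ t (k + 1)) (m j : ℕ) :
    (t (j + m))⁻¹ ≤ (t m)⁻¹ * (1 / 2) ^ j := by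
  induction j with
  | zero => simp
  | succ j ih =>
    have hpos := lacunary_pos h0 hlac (j + m)
    calc (t (j + 1 + m))⁻¹ ≤ (2 * t (j + m))⁻¹ := by
          rw [Nat.add_right_comm]; gcongr; exact hlac _
      _ = (t (j + m))⁻¹ / 2 := by ring
      _ ≤ (t m)⁻¹ * (1 / 2) ^ (j + 1) := by rw [pow_succ]; linarith

lemma lacunary_summable_inv (h0 : 0 < t 0) (hlac : ∀ k, 2 * t k ≤ t (k + 1)) (m : ℕ) :
    Summable fun j ↦ (t (j + m))⁻¹ :=
  .of_nonneg_of_le (fun _ ↦ inv_nonneg.2 (lacunary_pos h0 hlac _).le) (lacunary_inv_le h0 hlac m)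
    (summable_geometric_two.mul_left _)

lemma lacunary_tsum_inv_le (h0 : 0 < t 0) (hlac : ∀ k, 2 * t k ≤ t (k + 1)) (m : ℕ) :
    ∑' j, (t (j + m))⁻¹ ≤ 2 * (t m)⁻¹ := by
  calc ∑' j, (t (j + m))⁻¹ ≤ ∑' j, (t m)⁻¹ * (1 / 2) ^ j :=
        (lacunary_summable_inv h0 hlac m).tsum_le_tsum (lacunary_inv_le h0 hlac m)
          (summable_geometric_two.mul_left _)
    _ = 2 * (t m)⁻¹ := by rw [tsum_mul_left, tsum_geometric_two, mul_comm]

end Lacunary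

section CanonicalProduct

variable {t : ℕ → ℝ}

lemma norm_div_ofReal_of_pos (z : ℂ) {s : ℝ} (hs : 0 < s) : ‖z / (s : ℂ)‖ = ‖z‖ * s⁻¹ := by
  rw [norm_div, Complex.norm_of_nonneg hs.le, div_eq_mul_inv]

lemma summable_norm_div_lacunary (h0 : 0 < t 0) (hlac : ∀ k, 2 * t k ≤ t (k + 1)) (z : ℂ)
    (m : ℕ) : Summable fun j ↦ ‖z / (t (j + m) : ℂ)‖ := by
  simpa only [norm_div_ofReal_of_pos z (lacunary_pos h0 hlac _)]
    using (lacunary_summable_inv h0 hlac m).mul_left ‖z‖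

lemma multipliable_one_sub_div_lacunary (h0 : 0 < t 0) (hlac : ∀ k, 2 * t k ≤ t (k + 1))
    (z : ℂ) (m : ℕ) : Multipliable fun j ↦ 1 - z / (t (j + m) : ℂ) := by
  simpa only [sub_eq_add_neg] using multipliable_one_add_of_summable
    (f := fun j ↦ -(z / (t (j + m) : ℂ)))
    (by simpa only [norm_neg] using summable_norm_div_lacunary h0 hlac z m)

lemma norm_tprod_one_sub_div_eq (h0 : 0 < t 0) (hlac : ∀ k, 2 * t k ≤ t (k + 1)) (z : ℂ)
    (n : ℕ) : ‖∏' k, (1 - z / (t k : ℂ))‖ = (∏ k ∈ range n, ‖1 - z / (t k : ℂ)‖) *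
      (‖z - (t n : ℂ)‖ / t n) * ‖∏' j, (1 - z / (t (j + (n + 1)) : ℂ))‖ := by
  have htn : (t n : ℂ) ≠ 0 := by exact_mod_cast (lacunary_pos h0 hlac n).ne'
  rw [← Multipliable.prod_mul_tprod_nat_mul' (f := fun k ↦ 1 - z / (t k : ℂ)) (k := n + 1)
    (multipliable_one_sub_div_lacunary h0 hlac z (n + 1)), norm_mul, prod_range_succ, norm_mul,
    norm_prod, one_sub_div htn, norm_div, norm_sub_rev,
    Complex.norm_of_nonneg (lacunary_pos h0 hlac n).le]

lemma norm_tprod_tail_bounds (h0 : 0 < t 0) (hlac : ∀ k, 2 * t k ≤ t (k + 1)) {z : ℂ} {m : ℕ}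
    (hz : 4 * ‖z‖ ≤ 3 * t m) :
    Real.exp (-6) ≤ ‖∏' j, (1 - z / (t (j + m) : ℂ))‖ ∧
      ‖∏' j, (1 - z / (t (j + m) : ℂ))‖ ≤ Real.exp (3 / 2) := by
  have hratio : ‖z‖ * (t m)⁻¹ ≤ 3 / 4 := by
    rw [← div_eq_mul_inv, div_le_iff₀ (lacunary_pos h0 hlac m)]
    linarith
  have hterm (j : ℕ) : ‖z / (t (j + m) : ℂ)‖ ≤ 3 / 4 := by
    rw [norm_div_ofReal_of_pos z (lacunary_pos h0 hlac _)]
    refine le_trans ?_ hratio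
    gcongr
    · exact lacunary_pos h0 hlac m
    · exact lacunary_monotone h0 hlac (Nat.le_add_left m j)
  have hsum : ∑' j, ‖z / (t (j + m) : ℂ)‖ ≤ 3 / 2 := by
    simp only [norm_div_ofReal_of_pos z (lacunary_pos h0 hlac _)]
    rw [tsum_mul_left]
    calc ‖z‖ * ∑' j, (t (j + m))⁻¹ ≤ ‖z‖ * (2 * (t m)⁻¹) := by
          gcongr; exact lacunary_tsum_inv_le h0 hlac m
      _ ≤ 3 / 2 := by linarith
  obtain ⟨hlow, hup⟩ := exp_neg_tsum_div_le_norm_tprod_one_sub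
    (summable_norm_div_lacunary h0 hlac z m) (by norm_num : (3 / 4 : ℝ) < 1) hterm
  constructor
  · refine le_trans ?_ hlow
    gcongr
    rw [div_le_iff₀ (by norm_num)]
    linarith
  · exact hup.trans (by gcongr)

lemma prod_norm_one_sub_div_eq_mul {z : ℂ} (hz : z ≠ 0) (ht : ∀ k, 0 < t k) (n : ℕ) :
    ∏ k ∈ range n, ‖1 - z / (t k : ℂ)‖ =
      (‖z‖ ^ n / ∏ k ∈ range n, t k) * ∏ k ∈ range n, ‖1 - (t k : ℂ) / z‖ := by
  rw [show ‖z‖ ^ n = ∏ _k ∈ range n, ‖z‖ by simp, ← prod_div_distrib, ← prod_mul_distrib]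
  refine prod_congr rfl fun k _ ↦ ?_
  rw [norm_one_sub_div_eq_mul hz (by exact_mod_cast (ht k).ne'),
    Complex.norm_of_nonneg (ht k).le]

lemma lacunary_pow_div_prod_nonneg (h0 : 0 < t 0) (hlac : ∀ k, 2 * t k ≤ t (k + 1)) (z : ℂ)
    (n : ℕ) : 0 ≤ ‖z‖ ^ n / ∏ k ∈ range n, t k :=
  div_nonneg (by positivity) (prod_nonneg fun k _ ↦ (lacunary_pos h0 hlac k).le)

lemma prod_norm_head_bounds (h0 : 0 < t 0) (hlac : ∀ k, 2 * t k ≤ t (k + 1)) {z : ℂ} {n : ℕ}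
    (hz : ∀ k < n, 3 * t k ≤ 2 * ‖z‖) :
    Real.exp (-4) * (‖z‖ ^ n / ∏ k ∈ range n, t k) ≤ ∏ k ∈ range n, ‖1 - z / (t k : ℂ)‖ ∧
      ∏ k ∈ range n, ‖1 - z / (t k : ℂ)‖ ≤
        Real.exp (4 / 3) * (‖z‖ ^ n / ∏ k ∈ range n, t k) := by
  cases n with
  | zero =>
    simp only [range_zero, prod_empty, pow_zero, div_one, mul_one]
    exact ⟨Real.exp_le_one_iff.2 (by norm_num), Real.one_le_exp_iff.2 (by norm_num)⟩
  | succ n =>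
    have htn := lacunary_pos h0 hlac n
    have hr : 0 < ‖z‖ := by linarith [hz n n.lt_succ_self]
    have hnorm (k : ℕ) : ‖(t k : ℂ) / z‖ = t k / ‖z‖ := by
      rw [norm_div, Complex.norm_of_nonneg (lacunary_pos h0 hlac k).le]
    have hterm : ∀ k ∈ range (n + 1), ‖(t k : ℂ) / z‖ ≤ 2 / 3 := fun k hk ↦ by
      rw [hnorm, div_le_iff₀ hr]
      linarith [lacunary_monotone h0 hlac (Nat.lt_succ_iff.1 (mem_range.1 hk)),
        hz n n.lt_succ_self]
    have hsum : ∑ k ∈ range (n + 1), ‖(t k : ℂ) / z‖ ≤ 4 / 3 := by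
      simp only [hnorm, ← sum_div]
      rw [div_le_iff₀ hr]
      linarith [lacunary_sum_range_succ_le h0 hlac n, hz n n.lt_succ_self]
    have hP := lacunary_pow_div_prod_nonneg h0 hlac z (n + 1)
    have hlow := exp_neg_sum_div_le_prod_norm_one_sub _ _ (by norm_num) hterm
    have hup := prod_norm_one_sub_le_exp_sum (range (n + 1)) fun k ↦ (t k : ℂ) / z
    rw [prod_norm_one_sub_div_eq_mul (norm_pos_iff.1 hr) (lacunary_pos h0 hlac),
      mul_comm (Real.exp _), mul_comm (Real.exp _)]
    constructor
    · refine mul_le_mul_of_nonneg_left (le_trans ?_ hlow) hP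
      gcongr
      rw [div_le_iff₀ (by norm_num)]
      linarith
    · exact mul_le_mul_of_nonneg_left (hup.trans (by gcongr)) hP

lemma lacunary_bounds_of_mem_annulus (h0 : 0 < t 0) (hlac : ∀ k, 2 * t k ≤ t (k + 1))
    {n : ℕ} {z : ℂ}
    (hz : (n = 0 ∧ ‖z‖ ≤ (t 0 + t 1) / 2) ∨
      (1 ≤ n ∧ (t (n - 1) + t n) / 2 < ‖z‖ ∧ ‖z‖ ≤ (t n + t (n + 1)) / 2)) :
    (∀ k < n, 3 * t k ≤ 2 * ‖z‖) ∧ 4 * ‖z‖ ≤ 3 * t (n + 1) := by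
  rcases hz with ⟨rfl, hz⟩ | ⟨hn, hlow, hup⟩
  · exact ⟨fun k hk ↦ absurd hk k.not_lt_zero, by linarith [hlac 0]⟩
  · refine ⟨fun k hk ↦ ?_, by linarith [hlac n]⟩
    have hkn := lacunary_monotone h0 hlac (Nat.le_sub_one_of_lt hk)
    have := hlac (n - 1)
    rw [Nat.sub_add_cancel hn] at this
    linarith

end CanonicalProduct

/-- Two-sided estimate of a lacunary canonical product `A(z) = ∏ (1 - z/t_k)` on the
annulus `Ω_n` around `t_n`:
`|A(z)| ≍ (|z|ⁿ / ∏_{k<n} t_k) · |z - t_n| / t_n`. -/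
theorem stmt_19 (t : ℕ → ℝ) (h0 : 0 < t 0) (hlac : ∀ k, 2 * t k ≤ t (k + 1)) :
    ∃ c₁ > (0 : ℝ), ∃ c₂ > (0 : ℝ), ∀ (n : ℕ) (z : ℂ),
      ((n = 0 ∧ ‖z‖ ≤ (t 0 + t 1) / 2) ∨
        (1 ≤ n ∧ (t (n - 1) + t n) / 2 < ‖z‖ ∧
          ‖z‖ ≤ (t n + t (n + 1)) / 2)) →
      c₁ * ((‖z‖ ^ n / ∏ k ∈ Finset.range n, t k) *
            ‖z - (t n : ℂ)‖ / t n)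
          ≤ ‖∏' k : ℕ, (1 - z / (t k : ℂ))‖
      ∧ ‖∏' k : ℕ, (1 - z / (t k : ℂ))‖
          ≤ c₂ * ((‖z‖ ^ n / ∏ k ∈ Finset.range n, t k) *
            ‖z - (t n : ℂ)‖ / t n) := by
  refine ⟨Real.exp (-4) * Real.exp (-6), by positivity, Real.exp (4 / 3) * Real.exp (3 / 2),
    by positivity, fun n z hz ↦ ?_⟩
  obtain ⟨hhead, htail⟩ := lacunary_bounds_of_mem_annulus h0 hlac hz
  obtain ⟨hH₁, hH₂⟩ := prod_norm_head_bounds h0 hlac hhead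
  obtain ⟨hT₁, hT₂⟩ := norm_tprod_tail_bounds h0 hlac htail
  have hP := lacunary_pow_div_prod_nonneg h0 hlac z n
  have hQ : 0 ≤ ‖z - (t n : ℂ)‖ / t n := div_nonneg (norm_nonneg _) (lacunary_pos h0 hlac n).le
  rw [norm_tprod_one_sub_div_eq h0 hlac z n, mul_div_assoc]
  constructor
  · calc _ = Real.exp (-4) * (‖z‖ ^ n / ∏ k ∈ range n, t k) * (‖z - (t n : ℂ)‖ / t n) *
          Real.exp (-6) := by ring
      _ ≤ _ := by gcongr
  · calc _ ≤ Real.exp (4 / 3) * (‖z‖ ^ n / ∏ k ∈ range n, t k) * (‖z - (t n : ℂ)‖ / t n) *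
          Real.exp (3 / 2) := by gcongr
      _ = _ := by ring
end
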